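/- arXiv:2411.12773 — 7 statements merged into one kernel-verified Lean document; each statement's English description precedes it below -/
import Mathlib

section
/- Let E be a real inner product space, let L > 0, ρ > L, and δ ≥ 0. Let p, q : E → ℝ satisfy |p(x) − q(x)| ≤ δ/2 for all x ∈ E, and suppose −q is L-smooth. Fix x̂ ∈ E and define h(x) := −q(x) + (ρ/2)‖x − x̂‖². Assume x̃ ∈ E is a global minimizer of h. Given x₀ ∈ E, set x⁺ := x₀ − (1/ρ)∇h(x₀) (one gradient step with step size 2/((ρ−L)+(ρ+L)) = 1/ρ). Then for every x ∈ E: −p(x⁺) + (ρ/2)‖x⁺ − x̂‖² ≤ −p(x) + (ρ/2)‖x − x̂‖² + δ + ((ρ+L)L²/(2ρ²))·‖x₀ − x̃‖². In other words, x⁺ is a δₜ-approximate minimizer of the proximal objective of −p at x̂ with δₜ = δ + ((ρ+L)/2)((Qf−1)/(Qf+1))²‖x₀ − x̃‖² where Qf = (ρ−L)/(ρ+L), so (Qf−1)/(Qf+1) = −L/ρ. -/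
open scoped RealInnerProductSpace

/-- Descent lemma: if `f` has gradient `f'` which is `C`-Lipschitz, then
`f y ≤ f x + ⟪f' x, y - x⟫ + C/2 ‖y - x‖²`. -/
lemma descent_lemma {E : Type*} [NormedAddCommGroup E] [InnerProductSpace ℝ E]
    (f : E → ℝ) (f' : E → E) (C : ℝ) (hC : 0 ≤ C)
    (hdiff : ∀ x, HasFDerivAt f (innerSL ℝ (f' x)) x)
    (hlip : ∀ x y, ‖f' x - f' y‖ ≤ C * ‖x - y‖) (x y : E) :
    f y ≤ f x + ⟪f' x, y - x⟫ + C / 2 * ‖y - x‖ ^ 2 := by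
  set d := y - x with hd
  set ψ : ℝ → ℝ := fun t => f (x + t • d) - t * ⟪f' x, d⟫ - C / 2 * t ^ 2 * ‖d‖ ^ 2 with hψ
  have hc : ∀ t : ℝ, HasDerivAt (fun s : ℝ => x + s • d) d t := by
    intro t
    simpa using ((hasDerivAt_id t).smul_const d).const_add x
  have hder : ∀ t : ℝ, HasDerivAt ψ
      (⟪f' (x + t • d), d⟫ - ⟪f' x, d⟫ - C / 2 * (2 * t) * ‖d‖ ^ 2) t := by
    intro t
    have h1 : HasDerivAt (fun s : ℝ => f (x + s • d)) (⟪f' (x + t • d), d⟫) t := by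
      exact ((hdiff (x + t • d)).comp_hasDerivAt t (hc t)).congr_deriv (by simp)
    have h2 : HasDerivAt (fun s : ℝ => s * ⟪f' x, d⟫) (⟪f' x, d⟫) t := by
      simpa using (hasDerivAt_id t).mul_const (⟪f' x, d⟫)
    have h3 : HasDerivAt (fun s : ℝ => C / 2 * s ^ 2 * ‖d‖ ^ 2) (C / 2 * (2 * t) * ‖d‖ ^ 2) t := by
      have := ((hasDerivAt_pow 2 t).const_mul (C / 2)).mul_const (‖d‖ ^ 2)
      simpa [mul_comm, mul_assoc, mul_left_comm] using this
    exact (h1.sub h2).sub h3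
  have hmono : AntitoneOn ψ (Set.Icc 0 1) := by
    apply antitoneOn_of_deriv_nonpos (convex_Icc 0 1)
    · exact (fun t _ => (hder t).differentiableAt.continuousAt.continuousWithinAt)
    · exact (fun t _ => (hder t).differentiableAt.differentiableWithinAt)
    · intro t ht
      rw [interior_Icc] at ht
      rw [(hder t).deriv]
      have hb : ⟪f' (x + t • d) - f' x, d⟫ ≤ C * t * ‖d‖ ^ 2 := by
        calc ⟪f' (x + t • d) - f' x, d⟫ ≤ ‖f' (x + t • d) - f' x‖ * ‖d‖ :=
              real_inner_le_norm _ _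
          _ ≤ C * ‖(x + t • d) - x‖ * ‖d‖ := by
              have := hlip (x + t • d) x
              exact mul_le_mul_of_nonneg_right this (norm_nonneg d)
          _ = C * t * ‖d‖ ^ 2 := by
              rw [add_sub_cancel_left, norm_smul, Real.norm_eq_abs,
                abs_of_nonneg ht.1.le]
              ring
      have := inner_sub_left (𝕜 := ℝ) (f' (x + t • d)) (f' x) d
      rw [this] at hb
      nlinarith [hb]
  have key := hmono (Set.left_mem_Icc.2 zero_le_one) (Set.right_mem_Icc.2 zero_le_one) zero_le_one
  simp only [hψ, zero_smul, add_zero, one_smul, zero_mul, zero_pow, mul_zero, sub_zero,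
    one_pow, mul_one, one_mul] at key
  have : x + d = y := by rw [hd]; abel
  rw [this] at key
  linarith

/-- Theorem 1 of the paper (sufficient decreasing property): if `q` uniformly `δ/2`-approximates
`p` and `-q` is `L`-smooth, then one gradient step with step size `1/ρ` on
`h x = -q x + (ρ/2)‖x - xhat‖²` from `x₀` is a `δₜ`-approximate minimizer of the proximal
objective of `-p` at `xhat`, with `δₜ = δ + ((ρ+L)L²/(2ρ²))‖x₀ - xtil‖²`. -/
theorem stmt_0 {E : Type*} [NormedAddCommGroup E] [InnerProductSpace ℝ E]
    (L ρ δ : ℝ) (hL : 0 < L) (hρ : L < ρ) (hδ : 0 ≤ δ)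
    (p q : E → ℝ) (hpq : ∀ x, |p x - q x| ≤ δ / 2)
    -- `-q` is `L`-smooth, with gradient `nq'`
    (nq' : E → E)
    (hdiff : ∀ x, HasFDerivAt (fun y => -q y) (innerSL ℝ (nq' x)) x)
    (hlip : ∀ x y, ‖nq' x - nq' y‖ ≤ L * ‖x - y‖)
    (xhat xtil : E)
    -- `xtil` is a global minimizer of `h x = -q x + (ρ/2)‖x - xhat‖²`
    (hmin : ∀ x, -q xtil + ρ / 2 * ‖xtil - xhat‖ ^ 2 ≤ -q x + ρ / 2 * ‖x - xhat‖ ^ 2)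
    (x₀ xplus : E)
    -- one gradient step of size `1/ρ`: `∇h x₀ = nq' x₀ + ρ • (x₀ - xhat)`
    (hxplus : xplus = x₀ - (1 / ρ) • (nq' x₀ + ρ • (x₀ - xhat))) :
    ∀ x, -p xplus + ρ / 2 * ‖xplus - xhat‖ ^ 2 ≤
      -p x + ρ / 2 * ‖x - xhat‖ ^ 2 + δ + (ρ + L) * L ^ 2 / (2 * ρ ^ 2) * ‖x₀ - xtil‖ ^ 2 := by
  have hρ0 : 0 < ρ := hL.trans hρ
  set h : E → ℝ := fun x => -q x + ρ / 2 * ‖x - xhat‖ ^ 2 with hh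
  set h' : E → E := fun x => nq' x + ρ • (x - xhat) with hh'
  -- differentiability of h
  have hdiffh : ∀ x, HasFDerivAt h (innerSL ℝ (h' x)) x := by
    intro x
    have h1 : HasFDerivAt (fun y : E => ‖y - xhat‖ ^ 2)
        (2 • (innerSL ℝ (x - xhat))) x := by
      simpa using ((hasFDerivAt_id x).sub_const xhat).norm_sq
    have h2 : HasFDerivAt (fun y : E => ρ / 2 * ‖y - xhat‖ ^ 2)
        ((ρ / 2) • (2 • (innerSL ℝ (x - xhat)))) x := h1.const_smul (ρ / 2)
    have := (hdiff x).add h2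
    refine this.congr_fderiv ?_
    ext v
    simp [hh', inner_add_left, inner_smul_left, real_inner_smul_left]
    ring
  -- gradient of h is (ρ + L)-Lipschitz
  have hliph : ∀ x y, ‖h' x - h' y‖ ≤ (ρ + L) * ‖x - y‖ := by
    intro x y
    have : h' x - h' y = (nq' x - nq' y) + ρ • (x - y) := by
      simp only [hh']; module
    rw [this]
    calc ‖(nq' x - nq' y) + ρ • (x - y)‖ ≤ ‖nq' x - nq' y‖ + ‖ρ • (x - y)‖ := norm_add_le _ _
      _ ≤ L * ‖x - y‖ + ρ * ‖x - y‖ := by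
          rw [norm_smul, Real.norm_eq_abs, abs_of_pos hρ0]
          exact add_le_add_left (hlip x y) _
      _ = (ρ + L) * ‖x - y‖ := by ring
  -- gradient vanishes at xtil
  have hgrad0 : h' xtil = 0 := by
    have hlm : IsLocalMin h xtil := by
      apply IsMinOn.isLocalMin (s := Set.univ)
      · intro y _; exact hmin y
      · exact Filter.univ_mem
    have := hlm.hasFDerivAt_eq_zero (hdiffh xtil)
    have h0 : ⟪h' xtil, h' xtil⟫ = 0 := by
      have := congrFun (congrArg DFunLike.coe this) (h' xtil)
      simpa using this
    exact inner_self_eq_zero.mp h0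
  -- xplus - xtil = (1/ρ) • (nq' xtil - nq' x₀)
  have hxt : xtil = xhat - (ρ⁻¹) • nq' xtil := by
    have h0 : nq' xtil + ρ • (xtil - xhat) = 0 := hgrad0
    have hρne : ρ ≠ 0 := ne_of_gt hρ0
    have h2 := congrArg (fun v : E => ρ⁻¹ • v) h0
    simp only [smul_add, smul_smul, inv_mul_cancel₀ hρne, one_smul, smul_zero] at h2
    linear_combination (norm := module) h2
  have hxp : xplus = xhat - (ρ⁻¹) • nq' x₀ := by
    rw [hxplus]
    have hρne : ρ ≠ 0 := ne_of_gt hρ0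
    rw [smul_add, one_div, smul_smul, inv_mul_cancel₀ hρne]
    module
  have hdist : ‖xplus - xtil‖ ≤ (L / ρ) * ‖x₀ - xtil‖ := by
    have : xplus - xtil = ρ⁻¹ • (nq' xtil - nq' x₀) := by
      rw [hxp]; conv_lhs => rw [hxt]
      module
    rw [this, norm_smul, Real.norm_eq_abs, abs_of_pos (inv_pos.2 hρ0)]
    calc ρ⁻¹ * ‖nq' xtil - nq' x₀‖ ≤ ρ⁻¹ * (L * ‖xtil - x₀‖) := by
          exact mul_le_mul_of_nonneg_left (hlip xtil x₀) (inv_pos.2 hρ0).le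
      _ = (L / ρ) * ‖x₀ - xtil‖ := by rw [norm_sub_rev]; ring
  -- descent lemma for h at xtil
  have hdesc := descent_lemma h h' (ρ + L) (by linarith) hdiffh hliph xtil xplus
  rw [hgrad0] at hdesc
  simp only [inner_zero_left, add_zero] at hdesc
  -- conclude
  intro x
  have h1 := hmin x
  have h2 := abs_le.mp (hpq xplus)
  have h3 := abs_le.mp (hpq x)
  have hsq : ‖xplus - xtil‖ ^ 2 ≤ (L / ρ) ^ 2 * ‖x₀ - xtil‖ ^ 2 := by
    have := sq_le_sq' (by linarith [norm_nonneg (xplus - xtil)]) hdist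
    calc ‖xplus - xtil‖ ^ 2 ≤ ((L / ρ) * ‖x₀ - xtil‖) ^ 2 := this
      _ = (L / ρ) ^ 2 * ‖x₀ - xtil‖ ^ 2 := by ring
  have hfinal : (ρ + L) / 2 * ‖xplus - xtil‖ ^ 2 ≤
      (ρ + L) * L ^ 2 / (2 * ρ ^ 2) * ‖x₀ - xtil‖ ^ 2 := by
    have hpos : (0:ℝ) ≤ (ρ + L) / 2 := by linarith
    calc (ρ + L) / 2 * ‖xplus - xtil‖ ^ 2 ≤ (ρ + L) / 2 * ((L / ρ) ^ 2 * ‖x₀ - xtil‖ ^ 2) :=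
          mul_le_mul_of_nonneg_left hsq hpos
      _ = (ρ + L) * L ^ 2 / (2 * ρ ^ 2) * ‖x₀ - xtil‖ ^ 2 := by
          field_simp
  simp only [hh] at hdesc h1
  linarith
end

section
/- Let E be a real inner product space, 0 < m ≤ M, δ ≥ 0, and let F : E → ℝ be differentiable, m-strongly convex, and M-smooth, with global minimizer x*. Suppose x⁺ ∈ E satisfies F(x⁺) ≤ F(x*) + δ. Then for every x ∈ E: F(x) − F(x⁺) ≥ ((m−1)/2)‖x − x⁺‖² − Mδ. -/
open Real Set

-- first-order inequality for a differentiable convex function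
lemma aux_convex_first_order {E : Type*} [NormedAddCommGroup E] [InnerProductSpace ℝ E]
    (G : E → ℝ) (G' : E → E →L[ℝ] ℝ) (hG : ∀ z, HasFDerivAt G (G' z) z)
    (hc : ConvexOn ℝ Set.univ G) (x y : E) :
    G y + G' y (x - y) ≤ G x := by
  set φ : ℝ → ℝ := fun t => G (t • (x - y) + y) with hφdef
  have hline : ∀ t : ℝ, HasDerivAt (fun s : ℝ => s • (x - y) + y) (x - y) t := by
    intro t
    simpa using ((hasDerivAt_id t).smul_const (x - y)).add_const y
  have hφ' : ∀ t : ℝ, HasDerivAt φ (G' (t • (x - y) + y) (x - y)) t := by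
    intro t
    exact (hG _).comp_hasDerivAt t (hline t)
  have hconv : ConvexOn ℝ Set.univ φ := by
    have := hc.comp_affineMap (AffineMap.lineMap y x : ℝ →ᵃ[ℝ] E)
    have e : φ = G ∘ AffineMap.lineMap y x := by
      funext t
      simp only [hφdef, Function.comp_apply, AffineMap.lineMap_apply, vsub_eq_sub, vadd_eq_add]
    rw [e]; rw [Set.preimage_univ] at this; exact this
  have h := hconv.le_slope_of_hasDerivAt (mem_univ (0:ℝ)) (mem_univ (1:ℝ)) one_pos
    (by simpa using hφ' 0)
  rw [slope_def_field] at h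
  simp only [hφdef] at h
  rw [map_sub]
  norm_num at h
  linarith

lemma aux_descent {E : Type*} [NormedAddCommGroup E] [InnerProductSpace ℝ E]
    (M : ℝ) (hM : 0 ≤ M) (F : E → ℝ) (F' : E → E)
    (hdiff : ∀ x, HasFDerivAt F (innerSL ℝ (F' x)) x)
    (hlip : ∀ x y, ‖F' x - F' y‖ ≤ M * ‖x - y‖) (x y : E) :
    F y ≤ F x + inner ℝ (F' x) (y - x) + M / 2 * ‖y - x‖ ^ 2 := by
  set γ : ℝ → E := fun t => t • (y - x) + x with hγdef
  have hline : ∀ t : ℝ, HasDerivAt γ (y - x) t := by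
    intro t
    simpa [hγdef] using ((hasDerivAt_id t).smul_const (y - x)).add_const x
  have hg : ∀ t : ℝ, HasDerivAt (fun s => F (γ s)) (inner ℝ (F' (γ t)) (y - x) : ℝ) t := by
    intro t
    simpa [Function.comp_def] using (hdiff (γ t)).comp_hasDerivAt t (hline t)
  have hF'c : Continuous F' := by
    have : LipschitzWith M.toNNReal F' := by
      apply LipschitzWith.of_dist_le_mul
      intro a b
      rw [dist_eq_norm, dist_eq_norm]
      calc ‖F' a - F' b‖ ≤ M * ‖a - b‖ := hlip a b
        _ = M.toNNReal * ‖a - b‖ := by rw [Real.coe_toNNReal M hM]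
    exact this.continuous
  have hγc : Continuous γ := by fun_prop
  have hcont : Continuous fun t : ℝ => (inner ℝ (F' (γ t)) (y - x) : ℝ) :=
    (hF'c.comp hγc).inner continuous_const
  have key : F (γ 1) - F (γ 0) = ∫ t in (0:ℝ)..1, (inner ℝ (F' (γ t)) (y - x) : ℝ) :=
    (intervalIntegral.integral_eq_sub_of_hasDerivAt (fun t _ => hg t)
      (hcont.intervalIntegrable 0 1)).symm
  have hbound : (∫ t in (0:ℝ)..1, (inner ℝ (F' (γ t)) (y - x) : ℝ)) ≤
      ∫ t in (0:ℝ)..1, (inner ℝ (F' x) (y - x) + M * t * ‖y - x‖ ^ 2 : ℝ) := by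
    apply intervalIntegral.integral_mono_on (by norm_num)
      (hcont.intervalIntegrable 0 1)
      ((by fun_prop : Continuous fun t : ℝ =>
        (inner ℝ (F' x) (y - x) + M * t * ‖y - x‖ ^ 2 : ℝ)).intervalIntegrable 0 1)
    intro t ht
    have h1 : (inner ℝ (F' (γ t)) (y - x) : ℝ) - inner ℝ (F' x) (y - x) =
        inner ℝ (F' (γ t) - F' x) (y - x) := by rw [inner_sub_left]
    have h2 : (inner ℝ (F' (γ t) - F' x) (y - x) : ℝ) ≤ ‖F' (γ t) - F' x‖ * ‖y - x‖ :=
      real_inner_le_norm _ _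
    have h3 : ‖F' (γ t) - F' x‖ ≤ M * (t * ‖y - x‖) := by
      have := hlip (γ t) x
      simpa [hγdef, norm_smul, abs_of_nonneg ht.1] using this
    nlinarith [norm_nonneg (y - x), ht.1, ht.2]
  have hrhs : (∫ t in (0:ℝ)..1, (inner ℝ (F' x) (y - x) + M * t * ‖y - x‖ ^ 2 : ℝ)) =
      inner ℝ (F' x) (y - x) + M / 2 * ‖y - x‖ ^ 2 := by
    rw [intervalIntegral.integral_add (intervalIntegrable_const)
      ((by fun_prop : Continuous fun t : ℝ =>
        (M * t * ‖y - x‖ ^ 2 : ℝ)).intervalIntegrable 0 1)]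
    have : (∫ t in (0:ℝ)..1, M * t * ‖y - x‖ ^ 2) = M / 2 * ‖y - x‖ ^ 2 := by
      have : (fun t : ℝ => M * t * ‖y - x‖ ^ 2) = fun t : ℝ => (M * ‖y - x‖ ^ 2) * t := by
        funext t; ring
      rw [this, intervalIntegral.integral_const_mul, integral_id]
      ring
    rw [this]
    simp
  have h0 : γ 0 = x := by simp [hγdef]
  have h1 : γ 1 = y := by simp [hγdef]
  rw [h0, h1] at key
  linarith [key ▸ (hbound.trans_eq hrhs)]

lemma aux_strong {E : Type*} [NormedAddCommGroup E] [InnerProductSpace ℝ E]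
    (m : ℝ) (F : E → ℝ) (F' : E → E)
    (hdiff : ∀ x, HasFDerivAt F (innerSL ℝ (F' x)) x)
    (hsc : ConvexOn ℝ Set.univ fun x => F x - m / 2 * ‖x‖ ^ 2) (x y : E) :
    F y + inner ℝ (F' y) (x - y) + m / 2 * ‖x - y‖ ^ 2 ≤ F x := by
  have hG : ∀ z : E, HasFDerivAt (fun w => F w - m / 2 * ‖w‖ ^ 2)
      (innerSL ℝ (F' z) - m • innerSL ℝ z) z := by
    intro z
    have hn : HasFDerivAt (fun w : E => m / 2 * ‖w‖ ^ 2)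
        ((m / 2) • (2 • (innerSL ℝ z).comp (ContinuousLinearMap.id ℝ E))) z :=
      ((hasFDerivAt_id z).norm_sq).const_smul (m / 2)
    have heq : (m / 2) • (2 • (innerSL ℝ z).comp (ContinuousLinearMap.id ℝ E))
        = m • innerSL ℝ z := by
      ext w
      simp
      ring
    rw [heq] at hn
    exact (hdiff z).sub hn
  have h := aux_convex_first_order _ _ hG hsc x y
  simp only [ContinuousLinearMap.sub_apply, ContinuousLinearMap.smul_apply,
    innerSL_apply_apply, smul_eq_mul] at h
  have e1 : (inner ℝ y (x - y) : ℝ) = inner ℝ x y - ‖y‖ ^ 2 := by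
    rw [inner_sub_right, real_inner_self_eq_norm_sq, real_inner_comm]
  have e2 : ‖x - y‖ ^ 2 = ‖x‖ ^ 2 - 2 * inner ℝ x y + ‖y‖ ^ 2 := norm_sub_sq_real x y
  have e3 : m / 2 * ‖x - y‖ ^ 2 = m / 2 * ‖x‖ ^ 2 - m * inner ℝ x y + m / 2 * ‖y‖ ^ 2 := by
    rw [e2]; ring
  have e4 : m * (inner ℝ y (x - y) : ℝ) = m * inner ℝ x y - m * ‖y‖ ^ 2 := by
    rw [e1]; ring
  linarith

/-- Step 2 decrease estimate in the proof of Theorem 2 of the paper: if `x⁺` is a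
`δ`-approximate minimizer of an `m`-strongly convex, `M`-smooth function `F`, then
`F x - F x⁺ ≥ ((m-1)/2)‖x - x⁺‖² - Mδ` for every `x`. -/
theorem stmt_8 {E : Type*} [NormedAddCommGroup E] [InnerProductSpace ℝ E]
    (m M : ℝ) (hm : 0 < m) (hmM : m ≤ M) (δ : ℝ) (hδ : 0 ≤ δ)
    (F : E → ℝ) (F' : E → E)
    (hdiff : ∀ x, HasFDerivAt F (innerSL ℝ (F' x)) x)
    (hsc : ConvexOn ℝ Set.univ fun x => F x - m / 2 * ‖x‖ ^ 2)
    (hlip : ∀ x y, ‖F' x - F' y‖ ≤ M * ‖x - y‖)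
    (xstar : E) (hmin : ∀ x, F xstar ≤ F x)
    (xplus : E) (hxplus : F xplus ≤ F xstar + δ) :
    ∀ x : E, F x - F xplus ≥ (m - 1) / 2 * ‖x - xplus‖ ^ 2 - M * δ := by
  intro x
  have hM : 0 < M := lt_of_lt_of_le hm hmM
  set g := F' xplus with hgdef
  -- gradient norm bound: ‖g‖² ≤ 2Mδ
  have hgrad : ‖g‖ ^ 2 ≤ 2 * M * δ := by
    have hdesc := aux_descent M hM.le F F' hdiff hlip xplus (xplus - (1 / M) • g)
    have e0 : xplus - (1 / M) • g - xplus = -((1 / M) • g) := by abel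
    rw [e0] at hdesc
    have e1 : (inner ℝ g (-((1 / M) • g)) : ℝ) = -(1 / M) * ‖g‖ ^ 2 := by
      rw [inner_neg_right, real_inner_smul_right, real_inner_self_eq_norm_sq]
      ring
    have e2 : ‖-((1 / M) • g)‖ ^ 2 = (1 / M) ^ 2 * ‖g‖ ^ 2 := by
      rw [norm_neg, norm_smul, mul_pow, Real.norm_eq_abs, abs_of_pos (one_div_pos.mpr hM)]
    rw [e1, e2] at hdesc
    have hstar := hmin (xplus - (1 / M) • g)
    have hMne : M ≠ 0 := hM.ne'
    have : F xstar ≤ F xplus - 1 / (2 * M) * ‖g‖ ^ 2 := by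
      calc F xstar ≤ F (xplus - (1 / M) • g) := hstar
        _ ≤ F xplus + -(1 / M) * ‖g‖ ^ 2 + M / 2 * ((1 / M) ^ 2 * ‖g‖ ^ 2) := hdesc
        _ = F xplus - 1 / (2 * M) * ‖g‖ ^ 2 := by field_simp; ring
    have h2 : 1 / (2 * M) * ‖g‖ ^ 2 ≤ δ := by linarith
    calc ‖g‖ ^ 2 = 2 * M * (1 / (2 * M) * ‖g‖ ^ 2) := by field_simp
      _ ≤ 2 * M * δ := by
          apply mul_le_mul_of_nonneg_left h2
          positivity
  -- strong convexity at xplus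
  have hstrong := aux_strong m F F' hdiff hsc x xplus
  -- Young's inequality
  have hyoung : (inner ℝ g (x - xplus) : ℝ) ≥ -(1 / 2) * ‖g‖ ^ 2 - (1 / 2) * ‖x - xplus‖ ^ 2 := by
    have h1 : -(‖g‖ * ‖x - xplus‖) ≤ inner ℝ g (x - xplus) := by
      have := abs_real_inner_le_norm g (x - xplus)
      rw [abs_le] at this
      linarith [this.1]
    nlinarith [sq_nonneg (‖g‖ - ‖x - xplus‖)]
  nlinarith [hstrong, hyoung, hgrad]
end

section
/- Let E be a real inner product space, L > 0, ρ > 0, and let g : E → ℝ be L-smooth. Fix x ∈ E and define 𝓛(z, μ) := g(z) + ⟨μ, x − z⟩ + (ρ/2)‖x − z‖². Suppose z_k, z_{k+1}, z_k*, z_{k+1}*, μ_k, μ_{k+1} ∈ E and Δ_k, Δ_{k−1} ≥ 0 satisfy: μ_{k+1} = μ_k + ρ(x − z_{k+1}); ∇g(z_{k+1}*) = μ_{k+1} + ρ(z_{k+1} − z_{k+1}*); ∇g(z_k*) = μ_k + ρ(z_k − z_k*); ‖z_{k+1} − z_{k+1}*‖ ≤ Δ_k; and ‖z_k − z_k*‖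 ≤ Δ_{k−1}. Then 𝓛(z_k, μ_k) − 𝓛(z_{k+1}, μ_{k+1}) ≥ (ρ/2 − L/2 − 1 − 3L²/ρ)‖z_k − z_{k+1}‖² − ((L²+ρ²)/2 + 3(L+ρ)²/ρ)Δ_k² − (3(L+ρ)²/ρ)Δ_{k−1}². -/
open scoped RealInnerProductSpace

lemma descent_aux {E : Type*} [NormedAddCommGroup E] [InnerProductSpace ℝ E]
    (L : ℝ) (hL : 0 ≤ L) (g : E → ℝ) (g' : E → E)
    (hdiff : ∀ w, HasFDerivAt g (innerSL ℝ (g' w)) w)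
    (hlip : ∀ w v, ‖g' w - g' v‖ ≤ L * ‖w - v‖) (a b : E) :
    g b - g a - ⟪g' a, b - a⟫ ≥ -(L / 2) * ‖b - a‖ ^ 2 := by
  set u := b - a with hu
  have hcont : Continuous g' := by
    have hlw : LipschitzWith (Real.toNNReal L) g' := by
      apply LipschitzWith.of_dist_le_mul
      intro w v
      simp only [dist_eq_norm]
      calc ‖g' w - g' v‖ ≤ L * ‖w - v‖ := hlip w v
        _ = (Real.toNNReal L : ℝ) * ‖w - v‖ := by rw [Real.coe_toNNReal L hL]
    exact hlw.continuous
  have hφ : ∀ t : ℝ, HasDerivAt (fun t : ℝ => g (a + t • u)) ⟪g' (a + t • u), u⟫ t := by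
    intro t
    have h1 : HasDerivAt (fun t : ℝ => a + t • u) u t := by
      simpa using ((hasDerivAt_id t).smul_const u).const_add a
    have h2 := (hdiff (a + t • u)).comp_hasDerivAt t h1
    simp at h2
    exact h2
  have hcont2 : Continuous fun t : ℝ => ⟪g' (a + t • u), u⟫ :=
    (hcont.comp (continuous_const.add (continuous_id.smul continuous_const))).inner
      continuous_const
  have hint2 : IntervalIntegrable (fun t : ℝ => ⟪g' (a + t • u), u⟫)
      MeasureTheory.volume 0 1 := hcont2.intervalIntegrable 0 1
  have hint1 : IntervalIntegrable (fun t : ℝ => ⟪g' a, u⟫ - L * ‖u‖ ^ 2 * t)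
      MeasureTheory.volume 0 1 :=
    (continuous_const.sub (continuous_const.mul continuous_id)).intervalIntegrable 0 1
  have hFTC : ∫ t in (0:ℝ)..1, ⟪g' (a + t • u), u⟫ = g b - g a := by
    have h := intervalIntegral.integral_eq_sub_of_hasDerivAt
      (f := fun t : ℝ => g (a + t • u)) (f' := fun t : ℝ => ⟪g' (a + t • u), u⟫)
      (fun t _ => hφ t) hint2
    simpa [hu] using h
  have hmono : ∫ t in (0:ℝ)..1, (⟪g' a, u⟫ - L * ‖u‖ ^ 2 * t) ≤
      ∫ t in (0:ℝ)..1, ⟪g' (a + t • u), u⟫ := by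
    apply intervalIntegral.integral_mono_on (by norm_num) hint1 hint2
    intro t ht
    obtain ⟨ht0, ht1⟩ := ht
    have h1 : ⟪g' (a + t • u), u⟫ - ⟪g' a, u⟫ = ⟪g' (a + t • u) - g' a, u⟫ :=
      (inner_sub_left _ _ _).symm
    have h2 : ‖g' (a + t • u) - g' a‖ ≤ L * (t * ‖u‖) := by
      have h := hlip (a + t • u) a
      simpa [norm_smul, abs_of_nonneg ht0] using h
    have h3 := abs_real_inner_le_norm (g' (a + t • u) - g' a) u
    have h4 := norm_nonneg u
    have h5 := norm_nonneg (g' (a + t • u) - g' a)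
    rw [abs_le] at h3
    nlinarith [h3.1]
  have hleft : ∫ t in (0:ℝ)..1, (⟪g' a, u⟫ - L * ‖u‖ ^ 2 * t) =
      ⟪g' a, u⟫ - L * ‖u‖ ^ 2 / 2 := by
    have hi2 : IntervalIntegrable (fun t : ℝ => L * ‖u‖ ^ 2 * t) MeasureTheory.volume 0 1 := by
      apply Continuous.intervalIntegrable; continuity
    rw [intervalIntegral.integral_sub (intervalIntegrable_const) hi2,
      intervalIntegral.integral_const_mul, integral_id]
    simp
    ring
  rw [hFTC] at hmono
  rw [hleft] at hmono
  linarith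

set_option maxHeartbeats 1600000 in
/-- Step 3 decrease estimate in the proof of Theorem 2 of the paper: change of the augmented
Lagrangian `𝓛(z, μ) = g z + ⟪μ, x - z⟫ + (ρ/2)‖x - z‖²` under the inexact `z`-update and the
dual update. -/
theorem stmt_9 {E : Type*} [NormedAddCommGroup E] [InnerProductSpace ℝ E]
    (L ρ : ℝ) (hL : 0 < L) (hρ : 0 < ρ)
    (g : E → ℝ) (g' : E → E)
    (hdiff : ∀ w, HasFDerivAt g (innerSL ℝ (g' w)) w)
    (hlip : ∀ w v, ‖g' w - g' v‖ ≤ L * ‖w - v‖)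
    (x : E) (zk zk1 zks zk1s μk μk1 : E) (Δk Δkm1 : ℝ)
    (hΔk : 0 ≤ Δk) (hΔkm1 : 0 ≤ Δkm1)
    (hdual : μk1 = μk + ρ • (x - zk1))
    (hzk1s : g' zk1s = μk1 + ρ • (zk1 - zk1s))
    (hzks : g' zks = μk + ρ • (zk - zks))
    (hzk1near : ‖zk1 - zk1s‖ ≤ Δk)
    (hzknear : ‖zk - zks‖ ≤ Δkm1) :
    (g zk + ⟪μk, x - zk⟫ + ρ / 2 * ‖x - zk‖ ^ 2) -
        (g zk1 + ⟪μk1, x - zk1⟫ + ρ / 2 * ‖x - zk1‖ ^ 2) ≥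
      (ρ / 2 - L / 2 - 1 - 3 * L ^ 2 / ρ) * ‖zk - zk1‖ ^ 2 -
        ((L ^ 2 + ρ ^ 2) / 2 + 3 * (L + ρ) ^ 2 / ρ) * Δk ^ 2 -
        (3 * (L + ρ) ^ 2 / ρ) * Δkm1 ^ 2 := by
  have ha : (0:ℝ) ≤ ‖zk - zk1‖ := norm_nonneg _
  -- algebraic identity for the Lagrangian difference
  have hm_eq : ‖μk1 - μk‖ ^ 2 / ρ = ρ * ‖x - zk1‖ ^ 2 := by
    rw [hdual]
    simp only [add_sub_cancel_left, norm_smul, Real.norm_eq_abs, abs_of_pos hρ]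
    field_simp
  have hx : x - zk = (x - zk1) - (zk - zk1) := by abel
  have e1 : ⟪μk, x - zk⟫ = ⟪μk, x - zk1⟫ - ⟪μk, zk - zk1⟫ := by
    rw [hx, inner_sub_right]
  have e2 : ⟪μk1, x - zk1⟫ = ⟪μk, x - zk1⟫ + ρ * ‖x - zk1‖ ^ 2 := by
    rw [hdual, inner_add_left, real_inner_smul_left, real_inner_self_eq_norm_sq]
  have e3 : ‖x - zk‖ ^ 2 = ‖x - zk1‖ ^ 2 - 2 * ⟪x - zk1, zk - zk1⟫ + ‖zk - zk1‖ ^ 2 := by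
    rw [hx]; exact norm_sub_sq_real _ _
  have e4 : ⟪g' zk1 - μk1, zk - zk1⟫ =
      ⟪g' zk1, zk - zk1⟫ - ⟪μk, zk - zk1⟫ - ρ * ⟪x - zk1, zk - zk1⟫ := by
    rw [inner_sub_left, hdual, inner_add_left, real_inner_smul_left]; ring
  have hLHS : (g zk + ⟪μk, x - zk⟫ + ρ / 2 * ‖x - zk‖ ^ 2) -
      (g zk1 + ⟪μk1, x - zk1⟫ + ρ / 2 * ‖x - zk1‖ ^ 2) =
      (g zk - g zk1 - ⟪g' zk1, zk - zk1⟫) + ⟪g' zk1 - μk1, zk - zk1⟫ +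
        ρ / 2 * ‖zk - zk1‖ ^ 2 - ‖μk1 - μk‖ ^ 2 / ρ := by
    rw [hm_eq, e1, e2, e3, e4]
    ring
  -- descent lemma piece
  have hdes := descent_aux L hL.le g g' hdiff hlip zk1 zk
  -- inner product bound pieces
  have hP : ⟪g' zk1 - μk1, zk - zk1⟫ =
      ⟪g' zk1 - g' zk1s, zk - zk1⟫ + ⟪ρ • (zk1 - zk1s), zk - zk1⟫ := by
    have h : g' zk1 - μk1 = (g' zk1 - g' zk1s) + ρ • (zk1 - zk1s) := by
      rw [hzk1s]; abel
    rw [h, inner_add_left]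
  have hA : ⟪g' zk1 - g' zk1s, zk - zk1⟫ ≥ -((L ^ 2 * Δk ^ 2 + ‖zk - zk1‖ ^ 2) / 2) := by
    have h1 : ‖g' zk1 - g' zk1s‖ ≤ L * Δk :=
      (hlip zk1 zk1s).trans (mul_le_mul_of_nonneg_left hzk1near hL.le)
    have h3 := abs_real_inner_le_norm (g' zk1 - g' zk1s) (zk - zk1)
    rw [abs_le] at h3
    nlinarith [h3.1, norm_nonneg (g' zk1 - g' zk1s), sq_nonneg (L * Δk - ‖zk - zk1‖)]
  have hB : ⟪ρ • (zk1 - zk1s), zk - zk1⟫ ≥ -((ρ ^ 2 * Δk ^ 2 + ‖zk - zk1‖ ^ 2) / 2) := by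
    have h1 : ‖ρ • (zk1 - zk1s)‖ ≤ ρ * Δk := by
      rw [norm_smul, Real.norm_eq_abs, abs_of_pos hρ]
      exact mul_le_mul_of_nonneg_left hzk1near hρ.le
    have h3 := abs_real_inner_le_norm (ρ • (zk1 - zk1s)) (zk - zk1)
    rw [abs_le] at h3
    nlinarith [h3.1, norm_nonneg (ρ • (zk1 - zk1s)), sq_nonneg (ρ * Δk - ‖zk - zk1‖)]
  -- bound on the multiplier change
  have hm : ‖μk1 - μk‖ ≤ L * ‖zk - zk1‖ + (L + ρ) * (Δk + Δkm1) := by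
    have he : μk1 - μk = (g' zk1s - g' zks) - ρ • (zk1 - zk1s) + ρ • (zk - zks) := by
      have h1 : μk1 = g' zk1s - ρ • (zk1 - zk1s) := by rw [hzk1s]; abel
      have h2 : μk = g' zks - ρ • (zk - zks) := by rw [hzks]; abel
      rw [h1, h2]; abel
    have hgs : ‖g' zk1s - g' zks‖ ≤ L * (Δk + ‖zk - zk1‖ + Δkm1) := by
      refine (hlip zk1s zks).trans (mul_le_mul_of_nonneg_left ?_ hL.le)
      have h : zk1s - zks = (zk1s - zk1) + (zk1 - zk) + (zk - zks) := by abel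
      rw [h]
      refine (norm_add₃_le).trans ?_
      rw [norm_sub_rev zk1s zk1, norm_sub_rev zk1 zk]
      gcongr
    calc ‖μk1 - μk‖ ≤ ‖g' zk1s - g' zks‖ + ‖ρ • (zk1 - zk1s)‖ + ‖ρ • (zk - zks)‖ := by
          rw [he]
          have t1 := norm_add_le ((g' zk1s - g' zks) - ρ • (zk1 - zk1s)) (ρ • (zk - zks))
          have t2 := norm_sub_le (g' zk1s - g' zks) (ρ • (zk1 - zk1s))
          linarith
      _ ≤ L * (Δk + ‖zk - zk1‖ + Δkm1) + ρ * Δk + ρ * Δkm1 := by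
          have b1 : ‖ρ • (zk1 - zk1s)‖ ≤ ρ * Δk := by
            rw [norm_smul, Real.norm_eq_abs, abs_of_pos hρ]
            exact mul_le_mul_of_nonneg_left hzk1near hρ.le
          have b2 : ‖ρ • (zk - zks)‖ ≤ ρ * Δkm1 := by
            rw [norm_smul, Real.norm_eq_abs, abs_of_pos hρ]
            exact mul_le_mul_of_nonneg_left hzknear hρ.le
          gcongr
      _ = L * ‖zk - zk1‖ + (L + ρ) * (Δk + Δkm1) := by ring
  have hm2 : ‖μk1 - μk‖ ^ 2 ≤ 3 * L ^ 2 * ‖zk - zk1‖ ^ 2 + 3 * (L + ρ) ^ 2 * Δk ^ 2 +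
      3 * (L + ρ) ^ 2 * Δkm1 ^ 2 := by
    nlinarith [norm_nonneg (μk1 - μk), sq_nonneg (L * ‖zk - zk1‖ - (L + ρ) * Δk),
      sq_nonneg (L * ‖zk - zk1‖ - (L + ρ) * Δkm1), sq_nonneg ((L + ρ) * Δk - (L + ρ) * Δkm1)]
  have hm3 : ‖μk1 - μk‖ ^ 2 / ρ ≤ (3 * L ^ 2 * ‖zk - zk1‖ ^ 2 + 3 * (L + ρ) ^ 2 * Δk ^ 2 +
      3 * (L + ρ) ^ 2 * Δkm1 ^ 2) / ρ := (div_le_div_iff_of_pos_right hρ).mpr hm2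
  have hT : (ρ / 2 - L / 2 - 1 - 3 * L ^ 2 / ρ) * ‖zk - zk1‖ ^ 2 -
      ((L ^ 2 + ρ ^ 2) / 2 + 3 * (L + ρ) ^ 2 / ρ) * Δk ^ 2 -
      (3 * (L + ρ) ^ 2 / ρ) * Δkm1 ^ 2 =
      -(L / 2) * ‖zk - zk1‖ ^ 2 + (-((L ^ 2 * Δk ^ 2 + ‖zk - zk1‖ ^ 2) / 2)) +
      (-((ρ ^ 2 * Δk ^ 2 + ‖zk - zk1‖ ^ 2) / 2)) + ρ / 2 * ‖zk - zk1‖ ^ 2 -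
      (3 * L ^ 2 * ‖zk - zk1‖ ^ 2 + 3 * (L + ρ) ^ 2 * Δk ^ 2 +
        3 * (L + ρ) ^ 2 * Δkm1 ^ 2) / ρ := by
    field_simp
    ring
  rw [hLHS, hP]
  linarith [hdes, hA, hB, hm3, hT]
end

section
/- Let E be a real inner product space, L > 0, ρ ≥ 6L + 2, and let f, g : E → ℝ be L-smooth. Define 𝓛(x, z, μ) := f(x) + g(z) + ⟨μ, x − z⟩ + (ρ/2)‖x − z‖². Suppose x_k, x_{k+1}, x_{k+1}*, z_k, z_{k+1}, z_k*, z_{k+1}*, μ_k, μ_{k+1} ∈ E and δ_k, Δ_k, Δ_{k−1} ≥ 0 satisfy: x_{k+1}* is a global minimizer of x ↦ 𝓛(x, z_k, μ_k) and 𝓛(x_{k+1}, z_k, μ_k) ≤ 𝓛(x_{k+1}*, z_k, μ_k) + δ_k; μ_{k+1} = μ_k + ρ(x_{k+1} − z_{k+1}); ∇g(z_{k+1}*) = μ_{k+1} + ρ(z_{k+1} − z_{k+1}*) with ‖z_{k+1} − z_{k+1}*‖ ≤ Δ_k; and ∇g(z_k*) = μ_k + ρ(z_k − z_k*) with ‖z_k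 − z_k*‖ ≤ Δ_{k−1}. Then, with c₁ := ρ/2 − L/2 − 1 − 3L²/ρ > 0, c₂ := (L²+ρ²)/2 + 3(L+ρ)²/ρ, c₃ := 3(L+ρ)²/ρ, and c₄ := ρ + L: c₁(‖z_k − z_{k+1}‖² + ‖x_k − x_{k+1}‖²) + 𝓛(x_{k+1}, z_{k+1}, μ_{k+1}) ≤ 𝓛(x_k, z_k, μ_k) + c₂Δ_k² + c₃Δ_{k−1}² + c₄δ_k. -/
open scoped RealInnerProductSpace

/-- The augmented Lagrangian of `min f(x) + g(z)` subject to `x = z`. -/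
noncomputable def augLagr {E : Type*} [NormedAddCommGroup E] [InnerProductSpace ℝ E]
    (f g : E → ℝ) (ρ : ℝ) (x z μ : E) : ℝ :=
  f x + g z + ⟪μ, x - z⟫ + ρ / 2 * ‖x - z‖ ^ 2

/-- Descent-lemma bound for a function with Lipschitz gradient. -/
lemma smooth_core {E : Type*} [NormedAddCommGroup E] [InnerProductSpace ℝ E]
    (L : ℝ) (hL : 0 ≤ L) (f : E → ℝ) (f' : E → E)
    (hdiff : ∀ w, HasFDerivAt f (innerSL ℝ (f' w)) w)
    (hlip : ∀ w v, ‖f' w - f' v‖ ≤ L * ‖w - v‖) (x y : E) :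
    |f y - f x - ⟪f' x, y - x⟫| ≤ L / 2 * ‖y - x‖ ^ 2 := by
  set v := y - x with hv
  have hγ : ∀ t : ℝ, HasDerivAt (fun t : ℝ => f (x + t • v)) ⟪f' (x + t • v), v⟫ t := by
    intro t
    have h1 : HasDerivAt (fun t : ℝ => x + t • v) v t := by
      simpa using ((hasDerivAt_id t).smul_const v).const_add x
    have h2 := (hdiff (x + t • v)).comp_hasDerivAt t h1
    exact h2
  have hf'c : Continuous f' := by
    refine (LipschitzWith.of_dist_le_mul (K := ⟨L, hL⟩) fun w w' => ?_).continuous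
    rw [dist_eq_norm, dist_eq_norm]; exact hlip w w'
  have hcont : Continuous fun t : ℝ => (⟪f' (x + t • v), v⟫ : ℝ) :=
    (hf'c.comp (continuous_const.add (continuous_id.smul continuous_const))).inner
      continuous_const
  have key : ∫ t in (0:ℝ)..1, ⟪f' (x + t • v), v⟫ = f y - f x := by
    have := intervalIntegral.integral_eq_sub_of_hasDerivAt
      (f := fun t : ℝ => f (x + t • v)) (f' := fun t : ℝ => ⟪f' (x + t • v), v⟫)
      (a := 0) (b := 1) (fun t _ => hγ t) (hcont.intervalIntegrable 0 1)
    simpa [hv] using this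
  have hconst : ∫ t in (0:ℝ)..1, (⟪f' x, v⟫ : ℝ) = ⟪f' x, v⟫ := by simp
  have hdiffexpr : f y - f x - ⟪f' x, v⟫
      = ∫ t in (0:ℝ)..1, (⟪f' (x + t • v) - f' x, v⟫ : ℝ) := by
    rw [← key, ← hconst, ← intervalIntegral.integral_sub (hcont.intervalIntegrable 0 1)
      (continuous_const.intervalIntegrable 0 1)]
    simp [inner_sub_left]
  have hbnd : |∫ t in (0:ℝ)..1, (⟪f' (x + t • v) - f' x, v⟫ : ℝ)|
      ≤ |∫ t in (0:ℝ)..1, L * t * ‖v‖ ^ 2| := by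
    rw [← Real.norm_eq_abs]
    refine intervalIntegral.norm_integral_le_abs_of_norm_le ?_ ((by continuity : Continuous fun t : ℝ => L * t * ‖v‖ ^ 2).intervalIntegrable 0 1)
    refine (MeasureTheory.ae_restrict_iff' measurableSet_uIoc).2 ?_
    refine Filter.Eventually.of_forall fun t ht => ?_
    have ht' : 0 < t ∧ t ≤ 1 := by
      rw [Set.uIoc_of_le (by norm_num : (0:ℝ) ≤ 1)] at ht; exact ⟨ht.1, ht.2⟩
    calc ‖(⟪f' (x + t • v) - f' x, v⟫ : ℝ)‖ ≤ ‖f' (x + t • v) - f' x‖ * ‖v‖ := by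
          rw [Real.norm_eq_abs]; exact abs_real_inner_le_norm _ _
      _ ≤ L * ‖(x + t • v) - x‖ * ‖v‖ :=
          mul_le_mul_of_nonneg_right (hlip _ _) (norm_nonneg _)
      _ = L * t * ‖v‖ ^ 2 := by
          rw [add_sub_cancel_left, norm_smul, Real.norm_eq_abs,
            abs_of_pos ht'.1]; ring
  have hint : |∫ t in (0:ℝ)..1, L * t * ‖v‖ ^ 2| = L / 2 * ‖v‖ ^ 2 := by
    have : ∫ t in (0:ℝ)..1, L * t * ‖v‖ ^ 2
        = (L * ‖v‖ ^ 2) * ∫ t in (0:ℝ)..1, t := by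
      rw [← intervalIntegral.integral_const_mul]; congr 1; ext t; ring
    rw [this, integral_id]
    rw [abs_of_nonneg (by positivity)]; ring
  calc |f y - f x - ⟪f' x, v⟫| ≤ |∫ t in (0:ℝ)..1, L * t * ‖v‖ ^ 2| := by
        rw [hdiffexpr]; exact hbnd
    _ = L / 2 * ‖v‖ ^ 2 := hint

/-- Expansion of the augmented Lagrangian in the first variable. -/
lemma lagr_x_expand {E : Type*} [NormedAddCommGroup E] [InnerProductSpace ℝ E]
    (f g : E → ℝ) (ρ : ℝ) (x w z μ : E) :
    augLagr f g ρ w z μ = augLagr f g ρ x z μ + (f w - f x)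
      + ⟪μ + ρ • (x - z), w - x⟫ + ρ / 2 * ‖w - x‖ ^ 2 := by
  have h : w - z = (x - z) + (w - x) := by abel
  simp only [augLagr]
  rw [h, norm_add_sq_real, inner_add_right, inner_add_left, real_inner_smul_left]
  ring

/-- Expansion of the augmented Lagrangian in the second variable. -/
lemma lagr_z_expand {E : Type*} [NormedAddCommGroup E] [InnerProductSpace ℝ E]
    (f g : E → ℝ) (ρ : ℝ) (x z z' μ : E) :
    augLagr f g ρ x z' μ = augLagr f g ρ x z μ + (g z' - g z)
      + ⟪μ + ρ • (x - z), z - z'⟫ + ρ / 2 * ‖z - z'‖ ^ 2 := by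
  have h : x - z' = (x - z) + (z - z') := by abel
  simp only [augLagr]
  rw [h, norm_add_sq_real, inner_add_right, inner_add_left, real_inner_smul_left]
  ring

lemma inner_ge_neg {E : Type*} [NormedAddCommGroup E] [InnerProductSpace ℝ E]
    (u d : E) (c : ℝ) (h : ‖u‖ ≤ c) : -(c * ‖d‖) ≤ ⟪u, d⟫ := by
  have h1 : |⟪u, d⟫| ≤ ‖u‖ * ‖d‖ := abs_real_inner_le_norm u d
  have h2 : ‖u‖ * ‖d‖ ≤ c * ‖d‖ := mul_le_mul_of_nonneg_right h (norm_nonneg d)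
  have h3 := neg_abs_le (⟪u, d⟫ : ℝ)
  linarith

/-- Quadratic growth of the augmented Lagrangian around a global minimizer in x. -/
lemma quad_growth {E : Type*} [NormedAddCommGroup E] [InnerProductSpace ℝ E]
    (L ρ : ℝ) (hL : 0 < L) (hρ : 0 < ρ) (f g : E → ℝ) (f' : E → E)
    (hdiff : ∀ w, HasFDerivAt f (innerSL ℝ (f' w)) w)
    (hlip : ∀ w v, ‖f' w - f' v‖ ≤ L * ‖w - v‖) (z μ xs : E)
    (hmin : ∀ w, augLagr f g ρ xs z μ ≤ augLagr f g ρ w z μ) (y : E) :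
    augLagr f g ρ xs z μ + (ρ - L) / 2 * ‖y - xs‖ ^ 2 ≤ augLagr f g ρ y z μ := by
  set v := f' xs + μ + ρ • (xs - z) with hvdef
  have hup : ∀ w, augLagr f g ρ w z μ ≤ augLagr f g ρ xs z μ + ⟪v, w - xs⟫
      + (L + ρ) / 2 * ‖w - xs‖ ^ 2 := by
    intro w
    have hc := (abs_le.1 (smooth_core L hL.le f f' hdiff hlip xs w)).2
    have h2 := lagr_x_expand f g ρ xs w z μ
    have hv : (⟪v, w - xs⟫ : ℝ) = ⟪f' xs, w - xs⟫ + ⟪μ + ρ • (xs - z), w - xs⟫ := by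
      rw [hvdef, add_assoc, inner_add_left]
    rw [hv]
    nlinarith [h2, hc]
  have hv0 : v = 0 := by
    set K := (L + ρ) / 2 with hK
    have hK0 : 0 < K := by rw [hK]; linarith
    set t := 1 / (2 * K) with ht
    have ht0 : 0 < t := by positivity
    have hKt : K * t = 1 / 2 := by rw [ht]; field_simp
    have h := hup (xs - t • v)
    have hmin' := hmin (xs - t • v)
    have h1 : (xs - t • v) - xs = -(t • v) := by abel
    rw [h1, inner_neg_right, real_inner_smul_right, real_inner_self_eq_norm_sq,
      norm_neg, norm_smul, Real.norm_eq_abs, abs_of_pos ht0] at h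
    have hKq : K * (t * ‖v‖) ^ 2 = 1 / 2 * (t * ‖v‖ ^ 2) := by
      have he : K * (t * ‖v‖) ^ 2 = (K * t) * (t * ‖v‖ ^ 2) := by ring
      rw [he, hKt]
    have htv : t * ‖v‖ ^ 2 ≤ 0 := by linarith
    have hvsq : ‖v‖ ^ 2 ≤ 0 := by nlinarith [htv, ht0]
    have : ‖v‖ = 0 := by nlinarith [norm_nonneg v]
    exact norm_eq_zero.1 this
  have hμ : μ + ρ • (xs - z) = -(f' xs) := by
    have h : f' xs + (μ + ρ • (xs - z)) = 0 := by rw [← add_assoc, ← hvdef]; exact hv0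
    exact eq_neg_of_add_eq_zero_right h
  have hexp := lagr_x_expand f g ρ xs y z μ
  rw [hμ, inner_neg_left] at hexp
  have hc := (abs_le.1 (smooth_core L hL.le f f' hdiff hlip xs y)).1
  nlinarith [hexp, hc]

lemma c1_pos (L ρ : ℝ) (hL : 0 < L) (hρ : 6 * L + 2 ≤ ρ) :
    0 < ρ / 2 - L / 2 - 1 - 3 * L ^ 2 / ρ := by
  have hρ0 : 0 < ρ := by linarith
  have h : ρ / 2 - L / 2 - 1 - 3 * L ^ 2 / ρ = (ρ ^ 2 - L * ρ - 2 * ρ - 6 * L ^ 2) / (2 * ρ) := by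
    field_simp; ring
  rw [h]
  apply div_pos ?_ (by linarith)
  nlinarith [mul_le_mul_of_nonneg_right hρ hρ0.le, mul_le_mul_of_nonneg_left hρ hL.le,
    mul_pos hL hL]

lemma scalar_ineq (L ρ a b p δ : ℝ) (hL : 0 < L) (hρ : 6 * L + 2 ≤ ρ)
    (ha : 0 ≤ a) (hb : 0 ≤ b) (hp0 : 0 ≤ p) (hp : p ≤ a + b)
    (hδ : (ρ - L) / 2 * b ^ 2 ≤ δ) (hδ0 : 0 ≤ δ) :
    (ρ / 2 - L / 2 - 1 - 3 * L ^ 2 / ρ) * p ^ 2 ≤ (ρ - L) / 2 * a ^ 2 + (ρ + L - 1) * δ := by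
  have hρ0 : 0 < ρ := by linarith
  set c := ρ / 2 - L / 2 - 1 - 3 * L ^ 2 / ρ with hc
  set s := 1 + 3 * L ^ 2 / ρ with hs
  have hLρ : 0 ≤ 3 * L ^ 2 / ρ := by positivity
  have hs1 : 1 ≤ s := by rw [hs]; linarith
  have hs0 : 0 < s := by linarith
  have hcs : c + s = (ρ - L) / 2 := by rw [hc, hs]; ring
  have hc0 : 0 < c := c1_pos L ρ hL hρ
  have h1 : c * p ^ 2 ≤ c * (a + b) ^ 2 :=
    mul_le_mul_of_nonneg_left (by nlinarith) hc0.le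
  have h1s : s * (c * p ^ 2) ≤ s * (c * (a + b) ^ 2) :=
    mul_le_mul_of_nonneg_left h1 hs0.le
  have h2 : s * (c * (a + b) ^ 2) ≤ s * ((c + s) * a ^ 2) + c * ((c + s) * b ^ 2) := by
    nlinarith [sq_nonneg (s * a - c * b)]
  have h3 : c * ((c + s) * b ^ 2) ≤ c * δ := by
    apply mul_le_mul_of_nonneg_left _ hc0.le
    rw [hcs]; exact hδ
  have hcle : c ≤ ρ + L - 1 := by rw [hc]; linarith
  have h4 : c * δ ≤ s * ((ρ + L - 1) * δ) := by
    have ha1 : c * δ ≤ (ρ + L - 1) * δ := mul_le_mul_of_nonneg_right hcle hδ0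
    have ha2 : (ρ + L - 1) * δ ≤ s * ((ρ + L - 1) * δ) :=
      le_mul_of_one_le_left (mul_nonneg (by linarith) hδ0) hs1
    linarith
  have htot : s * (c * p ^ 2) ≤ s * ((c + s) * a ^ 2 + (ρ + L - 1) * δ) := by nlinarith
  have := le_of_mul_le_mul_left htot hs0
  rw [hcs] at this
  linarith

set_option maxHeartbeats 2000000 in
/-- Combined sufficient-decrease inequality (4.22) in Step 4 of the proof of Theorem 2 of the
paper, for one inexact ADMM iteration. -/
theorem stmt_10 {E : Type*} [NormedAddCommGroup E] [InnerProductSpace ℝ E]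
    (L ρ : ℝ) (hL : 0 < L) (hρ : 6 * L + 2 ≤ ρ)
    (f g : E → ℝ) (f' g' : E → E)
    (hfdiff : ∀ w, HasFDerivAt f (innerSL ℝ (f' w)) w)
    (hflip : ∀ w v, ‖f' w - f' v‖ ≤ L * ‖w - v‖)
    (hgdiff : ∀ w, HasFDerivAt g (innerSL ℝ (g' w)) w)
    (hglip : ∀ w v, ‖g' w - g' v‖ ≤ L * ‖w - v‖)
    (xk xk1 xk1s zk zk1 zks zk1s μk μk1 : E) (δk Δk Δkm1 : ℝ)
    (hδk : 0 ≤ δk) (hΔk : 0 ≤ Δk) (hΔkm1 : 0 ≤ Δkm1)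
    (hxk1s : ∀ w, augLagr f g ρ xk1s zk μk ≤ augLagr f g ρ w zk μk)
    (hxinexact : augLagr f g ρ xk1 zk μk ≤ augLagr f g ρ xk1s zk μk + δk)
    (hdual : μk1 = μk + ρ • (xk1 - zk1))
    (hzk1s : g' zk1s = μk1 + ρ • (zk1 - zk1s))
    (hzk1near : ‖zk1 - zk1s‖ ≤ Δk)
    (hzks : g' zks = μk + ρ • (zk - zks))
    (hzknear : ‖zk - zks‖ ≤ Δkm1) :
    0 < ρ / 2 - L / 2 - 1 - 3 * L ^ 2 / ρ ∧
      (ρ / 2 - L / 2 - 1 - 3 * L ^ 2 / ρ) * (‖zk - zk1‖ ^ 2 + ‖xk - xk1‖ ^ 2) +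
          augLagr f g ρ xk1 zk1 μk1 ≤
        augLagr f g ρ xk zk μk +
          ((L ^ 2 + ρ ^ 2) / 2 + 3 * (L + ρ) ^ 2 / ρ) * Δk ^ 2 +
          (3 * (L + ρ) ^ 2 / ρ) * Δkm1 ^ 2 + (ρ + L) * δk := by
  have hρ0 : 0 < ρ := by linarith
  refine ⟨c1_pos L ρ hL hρ, ?_⟩
  set D := ‖zk - zk1‖ with hD
  set p := ‖xk - xk1‖ with hp
  set a := ‖xk - xk1s‖ with ha
  set b := ‖xk1 - xk1s‖ with hb
  -- quadratic growth at the x-minimizer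
  have hqg1 := quad_growth L ρ hL hρ0 f g f' hfdiff hflip zk μk xk1s hxk1s xk
  have hqg2 := quad_growth L ρ hL hρ0 f g f' hfdiff hflip zk μk xk1s hxk1s xk1
  -- z-step decrease (E4)
  have hE4 : augLagr f g ρ xk1 zk1 μk + (ρ / 2 - L / 2 - 1) * D ^ 2 ≤
      augLagr f g ρ xk1 zk μk + (L ^ 2 + ρ ^ 2) / 2 * Δk ^ 2 := by
    have hx := lagr_z_expand f g ρ xk1 zk1 zk μk
    rw [← hdual] at hx
    have hzz : zk1 - zk = -(zk - zk1) := by abel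
    rw [hzz, inner_neg_right, norm_neg] at hx
    have hgc := (abs_le.1 (smooth_core L hL.le g g' hgdiff hglip zk1 zk)).1
    have hdecomp : (⟪g' zk1 - μk1, zk - zk1⟫ : ℝ)
        = ⟪g' zk1 - g' zk1s, zk - zk1⟫ + ⟪ρ • (zk1 - zk1s), zk - zk1⟫ := by
      rw [← inner_add_left]
      congr 1
      rw [hzk1s]; abel
    have hb1 : -(L * Δk * D) ≤ ⟪g' zk1 - g' zk1s, zk - zk1⟫ := by
      apply inner_ge_neg
      exact (hglip zk1 zk1s).trans (mul_le_mul_of_nonneg_left hzk1near hL.le)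
    have hb2 : -(ρ * Δk * D) ≤ ⟪ρ • (zk1 - zk1s), zk - zk1⟫ := by
      apply inner_ge_neg
      rw [norm_smul, Real.norm_eq_abs, abs_of_pos hρ0]
      exact mul_le_mul_of_nonneg_left hzk1near hρ0.le
    have hsub : (⟪g' zk1, zk - zk1⟫ : ℝ) - ⟪μk1, zk - zk1⟫ = ⟪g' zk1 - μk1, zk - zk1⟫ := by
      rw [inner_sub_left]
    have am1 : L * Δk * D ≤ (L ^ 2 * Δk ^ 2 + D ^ 2) / 2 := by
      nlinarith [sq_nonneg (L * Δk - D)]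
    have am2 : ρ * Δk * D ≤ (ρ ^ 2 * Δk ^ 2 + D ^ 2) / 2 := by
      nlinarith [sq_nonneg (ρ * Δk - D)]
    linarith [hx, hgc, hdecomp, hb1, hb2, hsub, am1, am2]
  -- dual-step increase (E5)
  have hE5 : augLagr f g ρ xk1 zk1 μk1 ≤ augLagr f g ρ xk1 zk1 μk
      + 3 * L ^ 2 / ρ * D ^ 2 + 3 * (L + ρ) ^ 2 / ρ * Δk ^ 2
      + 3 * (L + ρ) ^ 2 / ρ * Δkm1 ^ 2 := by
    have hdd : augLagr f g ρ xk1 zk1 μk1 = augLagr f g ρ xk1 zk1 μk + ρ * ‖xk1 - zk1‖ ^ 2 := by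
      simp only [augLagr, hdual]
      rw [inner_add_left, real_inner_smul_left, real_inner_self_eq_norm_sq]
      ring
    have hμk1 : μk1 = g' zk1s - ρ • (zk1 - zk1s) := by rw [hzk1s]; abel
    have hμk : μk = g' zks - ρ • (zk - zks) := by rw [hzks]; abel
    have hw : ρ • (xk1 - zk1) = (g' zk1s - g' zks) - ρ • (zk1 - zk1s) + ρ • (zk - zks) := by
      have h0 : ρ • (xk1 - zk1) = μk1 - μk := by rw [hdual]; abel
      rw [h0, hμk1, hμk]; abel
    have hns : ‖zk1s - zks‖ ≤ Δk + D + Δkm1 := by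
      have hu : zk1s - zks = (zk1s - zk1) + (zk1 - zk) + (zk - zks) := by abel
      calc ‖zk1s - zks‖ ≤ ‖(zk1s - zk1) + (zk1 - zk)‖ + ‖zk - zks‖ := by
            rw [hu]; exact norm_add_le _ _
        _ ≤ ‖zk1s - zk1‖ + ‖zk1 - zk‖ + ‖zk - zks‖ := by
            have := norm_add_le (zk1s - zk1) (zk1 - zk); linarith
        _ ≤ Δk + D + Δkm1 := by
            rw [norm_sub_rev zk1s zk1, norm_sub_rev zk1 zk]
            exact add_le_add (add_le_add hzk1near le_rfl) hzknear
    have hnw : ‖ρ • (xk1 - zk1)‖ ≤ L * D + (L + ρ) * Δk + (L + ρ) * Δkm1 := by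
      rw [hw]
      have t1 := norm_add_le ((g' zk1s - g' zks) - ρ • (zk1 - zk1s)) (ρ • (zk - zks))
      have t2 := norm_sub_le (g' zk1s - g' zks) (ρ • (zk1 - zk1s))
      have t3 : ‖g' zk1s - g' zks‖ ≤ L * (Δk + D + Δkm1) :=
        (hglip zk1s zks).trans (mul_le_mul_of_nonneg_left hns hL.le)
      have t4 : ‖ρ • (zk1 - zk1s)‖ ≤ ρ * Δk := by
        rw [norm_smul, Real.norm_eq_abs, abs_of_pos hρ0]
        exact mul_le_mul_of_nonneg_left hzk1near hρ0.le
      have t5 : ‖ρ • (zk - zks)‖ ≤ ρ * Δkm1 := by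
        rw [norm_smul, Real.norm_eq_abs, abs_of_pos hρ0]
        exact mul_le_mul_of_nonneg_left hzknear hρ0.le
      linarith [t1, t2, t3, t4, t5]
    have hsq : (ρ * ‖xk1 - zk1‖) ^ 2
        ≤ 3 * L ^ 2 * D ^ 2 + 3 * (L + ρ) ^ 2 * Δk ^ 2 + 3 * (L + ρ) ^ 2 * Δkm1 ^ 2 := by
      have h1 : ρ * ‖xk1 - zk1‖ = ‖ρ • (xk1 - zk1)‖ := by
        rw [norm_smul, Real.norm_eq_abs, abs_of_pos hρ0]
      have h2 : ‖ρ • (xk1 - zk1)‖ ^ 2 ≤ (L * D + (L + ρ) * Δk + (L + ρ) * Δkm1) ^ 2 :=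
        pow_le_pow_left₀ (norm_nonneg _) hnw 2
      have h3 : (L * D + (L + ρ) * Δk + (L + ρ) * Δkm1) ^ 2
          ≤ 3 * L ^ 2 * D ^ 2 + 3 * (L + ρ) ^ 2 * Δk ^ 2 + 3 * (L + ρ) ^ 2 * Δkm1 ^ 2 := by
        nlinarith [sq_nonneg (L * D - (L + ρ) * Δk), sq_nonneg (L * D - (L + ρ) * Δkm1),
          sq_nonneg ((L + ρ) * Δk - (L + ρ) * Δkm1)]
      rw [h1]
      linarith [h2, h3]
    have hkey : ρ * ‖xk1 - zk1‖ ^ 2 ≤ 3 * L ^ 2 / ρ * D ^ 2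
        + 3 * (L + ρ) ^ 2 / ρ * Δk ^ 2 + 3 * (L + ρ) ^ 2 / ρ * Δkm1 ^ 2 := by
      have heq : ρ * ‖xk1 - zk1‖ ^ 2 = (ρ * ‖xk1 - zk1‖) ^ 2 / ρ := by
        field_simp
      rw [heq]
      rw [div_le_iff₀ hρ0]
      calc (ρ * ‖xk1 - zk1‖) ^ 2
          ≤ 3 * L ^ 2 * D ^ 2 + 3 * (L + ρ) ^ 2 * Δk ^ 2 + 3 * (L + ρ) ^ 2 * Δkm1 ^ 2 := hsq
        _ = (3 * L ^ 2 / ρ * D ^ 2 + 3 * (L + ρ) ^ 2 / ρ * Δk ^ 2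
            + 3 * (L + ρ) ^ 2 / ρ * Δkm1 ^ 2) * ρ := by field_simp
    linarith [hdd, hkey]
  -- scalar inequality for the x-step
  have hptri : p ≤ a + b := by
    have h : xk - xk1 = (xk - xk1s) - (xk1 - xk1s) := by abel
    rw [hp, ha, hb, h]
    exact norm_sub_le _ _
  have hδb : (ρ - L) / 2 * b ^ 2 ≤ δk := by linarith [hqg2, hxinexact]
  have hscalar := scalar_ineq L ρ a b p δk hL hρ (norm_nonneg _) (norm_nonneg _)
    (norm_nonneg _) hptri hδb hδk
  have hsplit : (ρ / 2 - L / 2 - 1 - 3 * L ^ 2 / ρ) * (D ^ 2 + p ^ 2)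
      = (ρ / 2 - L / 2 - 1 - 3 * L ^ 2 / ρ) * D ^ 2
        + (ρ / 2 - L / 2 - 1 - 3 * L ^ 2 / ρ) * p ^ 2 := by ring
  have hc1D : (ρ / 2 - L / 2 - 1 - 3 * L ^ 2 / ρ) * D ^ 2
      = (ρ / 2 - L / 2 - 1) * D ^ 2 - 3 * L ^ 2 / ρ * D ^ 2 := by ring
  linarith [hqg1, hxinexact, hE4, hE5, hscalar, hsplit, hc1D]
end

section
/- Let E be a real inner product space, L > 0, ρ ≥ L + 1, and let f, g : E → ℝ with g L-smooth. Suppose f + g is bounded below and set m* := inf_{x}(f(x) + g(x)). Suppose z, z*, μ ∈ E satisfy μ = ∇g(z*) − ρ(z − z*). Then for every x ∈ E: f(x) + g(z) + ⟨μ, x − z⟩ + (ρ/2)‖x − z‖² ≥ m* − ((L+ρ)²/2)‖z − z*‖². In particular, the augmented Lagrangian 𝓛(x, z, μ) is bounded below along the inexact ADMM iterates. -/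
open scoped RealInnerProductSpace

/-- Descent lemma: an `L`-smooth function satisfies the quadratic upper bound. -/
lemma descent_lemma_s11 {E : Type*} [NormedAddCommGroup E] [InnerProductSpace ℝ E]
    (L : ℝ) (hL : 0 ≤ L) (g : E → ℝ) (g' : E → E)
    (hgdiff : ∀ w, HasFDerivAt g (innerSL ℝ (g' w)) w)
    (hglip : ∀ w v, ‖g' w - g' v‖ ≤ L * ‖w - v‖)
    (z x : E) : g x ≤ g z + ⟪g' z, x - z⟫ + L / 2 * ‖x - z‖ ^ 2 := by
  set u := x - z with hu
  set ψ : ℝ → ℝ := fun t => g (z + t • u) - t * ⟪g' z, u⟫ - L / 2 * t ^ 2 * ‖u‖ ^ 2 with hψ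
  have hline : ∀ t : ℝ, HasDerivAt (fun s : ℝ => z + s • u) u t := fun t =>
    by simpa using ((hasDerivAt_id t).smul_const u).const_add z
  have hderiv : ∀ t : ℝ, HasDerivAt ψ
      (⟪g' (z + t • u), u⟫ - ⟪g' z, u⟫ - L * t * ‖u‖ ^ 2) t := by
    intro t
    have h1 : HasDerivAt (fun s : ℝ => g (z + s • u)) (⟪g' (z + t • u), u⟫) t := by
      have := (hgdiff (z + t • u)).comp_hasDerivAt t (hline t)
      simp at this; exact this
    have h2 : HasDerivAt (fun s : ℝ => s * ⟪g' z, u⟫) (⟪g' z, u⟫) t := by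
      simpa using (hasDerivAt_id t).mul_const (⟪g' z, u⟫)
    have h3 : HasDerivAt (fun s : ℝ => L / 2 * s ^ 2 * ‖u‖ ^ 2) (L * t * ‖u‖ ^ 2) t := by
      have := ((hasDerivAt_pow 2 t).const_mul (L / 2)).mul_const (‖u‖ ^ 2)
      refine this.congr_deriv ?_
      push_cast; ring
    exact (h1.sub h2).sub h3
  have hanti : AntitoneOn ψ (Set.Icc (0 : ℝ) 1) := by
    apply antitoneOn_of_deriv_nonpos (convex_Icc 0 1)
    · exact fun t _ => ((hderiv t).continuousAt).continuousWithinAt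
    · exact fun t _ => ((hderiv t).differentiableAt).differentiableWithinAt
    · intro t ht
      rw [interior_Icc] at ht
      rw [(hderiv t).deriv]
      have hineq : ⟪g' (z + t • u) - g' z, u⟫ ≤ ‖g' (z + t • u) - g' z‖ * ‖u‖ :=
        real_inner_le_norm _ _
      have hlip' : ‖g' (z + t • u) - g' z‖ ≤ L * (t * ‖u‖) := by
        have := hglip (z + t • u) z
        simpa [norm_smul, abs_of_pos ht.1] using this
      have hu0 : (0 : ℝ) ≤ ‖u‖ := norm_nonneg _
      nlinarith [mul_le_mul_of_nonneg_right hlip' hu0, inner_sub_left (𝕜 := ℝ) (g' (z + t • u)) (g' z) u]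
  have key := hanti (Set.left_mem_Icc.2 (by norm_num)) (Set.right_mem_Icc.2 (by norm_num)) zero_le_one
  simp only [hψ, zero_smul, add_zero, one_smul, zero_mul, zero_pow, mul_zero, sub_zero,
    one_mul, one_pow, mul_one] at key
  have hx : z + u = x := by rw [hu]; abel
  rw [hx] at key
  linarith

/-- Lower bound on the augmented Lagrangian along the inexact ADMM iterates (Step 4 of the
proof of Theorem 2 of the paper). -/
theorem stmt_11 {E : Type*} [NormedAddCommGroup E] [InnerProductSpace ℝ E]
    (L ρ : ℝ) (hL : 0 < L) (hρ : L + 1 ≤ ρ)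
    (f g : E → ℝ) (g' : E → E)
    (hgdiff : ∀ w, HasFDerivAt g (innerSL ℝ (g' w)) w)
    (hglip : ∀ w v, ‖g' w - g' v‖ ≤ L * ‖w - v‖)
    (hbdd : BddBelow (Set.range fun x => f x + g x))
    (z zs μ : E)
    (hμ : μ = g' zs - ρ • (z - zs)) :
    ∀ x : E, f x + g z + ⟪μ, x - z⟫ + ρ / 2 * ‖x - z‖ ^ 2 ≥
      (⨅ w, (f w + g w)) - (L + ρ) ^ 2 / 2 * ‖z - zs‖ ^ 2 := by
  intro x
  have hρpos : 0 < ρ := by linarith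
  set t := ‖x - z‖ with ht
  set s := ‖z - zs‖ with hs
  have ht0 : 0 ≤ t := norm_nonneg _
  have hs0 : 0 ≤ s := norm_nonneg _
  -- descent lemma
  have hdesc : g x ≤ g z + ⟪g' z, x - z⟫ + L / 2 * t ^ 2 :=
    descent_lemma_s11 L hL.le g g' hgdiff hglip z x
  -- infimum bound
  have hinf : (⨅ w, (f w + g w)) ≤ f x + g x := ciInf_le hbdd x
  -- norm bound on μ - g' z
  have hnorm : ‖μ - g' z‖ ≤ (L + ρ) * s := by
    have h1 : μ - g' z = (g' zs - g' z) - ρ • (z - zs) := by rw [hμ]; abel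
    calc ‖μ - g' z‖ ≤ ‖g' zs - g' z‖ + ‖ρ • (z - zs)‖ := by rw [h1]; exact norm_sub_le _ _
      _ ≤ L * ‖zs - z‖ + ρ * s := by
          have := hglip zs z
          rw [norm_smul, Real.norm_eq_abs, abs_of_pos hρpos]
          linarith
      _ = (L + ρ) * s := by rw [norm_sub_rev]; ring
  -- inner product bound
  have hinner : ⟪g' z - μ, x - z⟫ ≤ (L + ρ) * s * t := by
    calc ⟪g' z - μ, x - z⟫ ≤ ‖g' z - μ‖ * t := real_inner_le_norm _ _
      _ ≤ (L + ρ) * s * t := by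
          rw [norm_sub_rev]
          exact mul_le_mul_of_nonneg_right hnorm ht0
  have hsplit : ⟪g' z - μ, x - z⟫ = ⟪g' z, x - z⟫ - ⟪μ, x - z⟫ :=
    inner_sub_left _ _ _
  nlinarith [sq_nonneg (t - (L + ρ) * s)]
end

section
/- Let c > 0, let (λ_k)_{k≥0} be a sequence of nonnegative real numbers, let (ε_k)_{k≥0} be a sequence of nonnegative real numbers with ∑_k ε_k < ∞, and let (L_k)_{k≥0} be a real sequence bounded from below satisfying L_{k+1} ≤ L_k + ε_k for all k ≥ 0. Suppose that for all k ≥ 0: ((k+1)c/2)λ_{k+1} + L_{k+1} + (c/2)λ_k ≤ (kc/2)λ_k + L_k + ε_k. Then ∑_{k=0}^∞ λ_k < ∞, (L_k) converges, (k·λ_k) converges, and k·λ_k → 0, i.e. λ_k = o(1/k). -/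
open Filter

/-- The recursion argument of Step 7 in the proof of Theorem 2 of the paper: from the weighted
sufficient-decrease inequality one gets `∑ λ_k < ∞`, convergence of `(L_k)` and `(k·λ_k)`, and
`λ_k = o(1/k)`. -/
theorem stmt_15 (c : ℝ) (hc : 0 < c)
    (lam ε : ℕ → ℝ) (hlam : ∀ k, 0 ≤ lam k) (hε : ∀ k, 0 ≤ ε k)
    (hεsum : Summable ε)
    (Lk : ℕ → ℝ) (hLbdd : BddBelow (Set.range Lk))
    (hLdec : ∀ k, Lk (k + 1) ≤ Lk k + ε k)
    (hrec : ∀ k : ℕ, ((k : ℝ) + 1) * c / 2 * lam (k + 1) + Lk (k + 1) + c / 2 * lam k ≤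
        (k : ℝ) * c / 2 * lam k + Lk k + ε k) :
    Summable lam ∧ (∃ l : ℝ, Tendsto Lk atTop (nhds l)) ∧
      (∃ l : ℝ, Tendsto (fun k : ℕ => (k : ℝ) * lam k) atTop (nhds l)) ∧
      Tendsto (fun k : ℕ => (k : ℝ) * lam k) atTop (nhds 0) := by
  obtain ⟨B, hB⟩ := hLbdd
  have hBle : ∀ k, B ≤ Lk k := fun k => hB ⟨k, rfl⟩
  set V : ℕ → ℝ := fun k => (k : ℝ) * c / 2 * lam k + (Lk k - B) with hVdef
  clear_value V
  have hV0 : ∀ k, 0 ≤ V k := by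
    intro k
    have h1 : 0 ≤ (k : ℝ) * c / 2 * lam k :=
      mul_nonneg (by positivity) (hlam k)
    have h2 := hBle k
    simp only [hVdef]; linarith
  have hVrec : ∀ k, V (k + 1) + c / 2 * lam k ≤ V k + ε k := by
    intro k
    have := hrec k
    simp only [hVdef]
    push_cast
    linarith
  -- partial sums bound
  have hps : ∀ n, ∑ i ∈ Finset.range n, c / 2 * lam i ≤ V 0 + ∑ i ∈ Finset.range n, ε i - V n := by
    intro n
    induction n with
    | zero => simp
    | succ n ih =>
      rw [Finset.sum_range_succ, Finset.sum_range_succ]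
      have := hVrec n
      linarith
  have hεnonneg_sum : ∀ n, ∑ i ∈ Finset.range n, ε i ≤ ∑' i, ε i := fun n =>
    Summable.sum_le_tsum _ (fun i _ => hε i) hεsum
  have hsum2 : Summable (fun i => c / 2 * lam i) := by
    apply summable_of_sum_range_le (c := V 0 + ∑' i, ε i)
      (fun i => mul_nonneg (by positivity) (hlam i))
    intro n
    have h1 := hps n
    have h2 := hV0 n
    have h3 := hεnonneg_sum n
    linarith
  have hsum : Summable lam := by
    have h := hsum2.mul_left (2 / c)
    have : (fun i => 2 / c * (c / 2 * lam i)) = lam := by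
      funext i; field_simp
    rwa [this] at h
  -- tails
  set t : ℕ → ℝ := fun k => ∑' j, ε (j + k) with htdef
  clear_value t
  have htsummable : ∀ k, Summable (fun j => ε (j + k)) := fun k =>
    (summable_nat_add_iff k).mpr hεsum
  have ht0 : ∀ k, 0 ≤ t k := by
    intro k; rw [htdef]; exact tsum_nonneg (fun j => hε _)
  have htsucc : ∀ k, t k = ε k + t (k + 1) := by
    intro k
    have h := Summable.tsum_eq_zero_add (htsummable k)
    simp only [htdef, zero_add] at h ⊢
    rw [h]
    congr 1
    apply tsum_congr
    intro j
    congr 1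
    omega
  have httend : Tendsto t atTop (nhds 0) := by
    rw [htdef]; exact tendsto_sum_nat_add ε
  -- W = V + t antitone
  set W : ℕ → ℝ := fun k => V k + t k with hWdef
  clear_value W
  have hWanti : Antitone W := by
    apply antitone_nat_of_succ_le
    intro k
    have h1 := hVrec k
    have h2 := htsucc k
    have h3 : 0 ≤ c / 2 * lam k := mul_nonneg (by positivity) (hlam k)
    simp only [hWdef]; linarith
  have hWbdd : BddBelow (Set.range W) := by
    refine ⟨0, ?_⟩
    rintro x ⟨k, rfl⟩
    have := hV0 k; have := ht0 k
    simp only [hWdef]; linarith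
  have hWtend : Tendsto W atTop (nhds (⨅ k, W k)) := tendsto_atTop_ciInf hWanti hWbdd
  set l : ℝ := ⨅ k, W k
  have hVtend : Tendsto V atTop (nhds l) := by
    have := hWtend.sub httend
    simpa [hWdef] using this
  -- L convergence
  set W' : ℕ → ℝ := fun k => Lk k + t k with hW'def
  clear_value W'
  have hW'anti : Antitone W' := by
    apply antitone_nat_of_succ_le
    intro k
    have h1 := hLdec k
    have h2 := htsucc k
    simp only [hW'def]; linarith
  have hW'bdd : BddBelow (Set.range W') := by
    refine ⟨B, ?_⟩
    rintro x ⟨k, rfl⟩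
    have := hBle k; have := ht0 k
    simp only [hW'def]; linarith
  have hW'tend : Tendsto W' atTop (nhds (⨅ k, W' k)) := tendsto_atTop_ciInf hW'anti hW'bdd
  set l' : ℝ := ⨅ k, W' k
  have hLtend : Tendsto Lk atTop (nhds l') := by
    have := hW'tend.sub httend
    simpa [hW'def] using this
  -- k * lam k convergence
  have hid : ∀ k : ℕ, (k : ℝ) * lam k = 2 / c * (V k - (Lk k - B)) := by
    intro k
    simp only [hVdef]
    field_simp
    ring
  set m : ℝ := 2 / c * (l - (l' - B)) with hmdef
  have hmtend : Tendsto (fun k : ℕ => (k : ℝ) * lam k) atTop (nhds m) := by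
    have h : Tendsto (fun k => 2 / c * (V k - (Lk k - B))) atTop (nhds m) := by
      exact ((hVtend.sub (hLtend.sub tendsto_const_nhds)).const_mul _)
    exact h.congr (fun k => (hid k).symm)
  have hm0 : 0 ≤ m := ge_of_tendsto' hmtend (fun k => mul_nonneg (Nat.cast_nonneg k) (hlam k))
  -- m = 0
  have hmz : m = 0 := by
    by_contra hne
    have hmpos : 0 < m := lt_of_le_of_ne hm0 (Ne.symm hne)
    have hev : ∀ᶠ k : ℕ in atTop, m / 2 < (k : ℝ) * lam k :=
      hmtend.eventually (eventually_gt_nhds (by linarith))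
    obtain ⟨N, hN⟩ := hev.exists_forall_of_atTop
    have hbig : Summable (fun k : ℕ => lam (k + (N + 1))) :=
      (summable_nat_add_iff (N + 1)).mpr hsum
    have hle : ∀ k : ℕ, m / 2 * ((k + (N + 1) : ℕ) : ℝ)⁻¹ ≤ lam (k + (N + 1)) := by
      intro k
      have hk : ((k + (N + 1) : ℕ) : ℝ) > 0 := by positivity
      have := hN (k + (N + 1)) (by omega)
      rw [mul_inv_le_iff₀ hk, mul_comm]
      linarith
    have hsml : Summable (fun k : ℕ => m / 2 * ((k + (N + 1) : ℕ) : ℝ)⁻¹) :=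
      Summable.of_nonneg_of_le
        (fun k => mul_nonneg (by linarith : (0:ℝ) ≤ m / 2) (by positivity)) hle hbig
    have hinv : Summable (fun k : ℕ => ((k + (N + 1) : ℕ) : ℝ)⁻¹) := by
      have h := hsml.mul_left (2 / m)
      have heq : (fun k : ℕ => 2 / m * (m / 2 * ((k + (N + 1) : ℕ) : ℝ)⁻¹)) =
          fun k : ℕ => ((k + (N + 1) : ℕ) : ℝ)⁻¹ := by
        funext k
        field_simp
      rwa [heq] at h
    have : Summable (fun n : ℕ => ((n : ℕ) : ℝ)⁻¹) :=
      (summable_nat_add_iff (N + 1)).mp hinv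
    exact Real.not_summable_natCast_inv this
  refine ⟨hsum, ⟨l', hLtend⟩, ⟨m, hmtend⟩, ?_⟩
  rwa [hmz] at hmtend
end

section
/- (Theorem 2, abstract inexact ADMM form.) Let E = EuclideanSpace ℝ (Fin d), L > 0, ρ ≥ 6L + 2, and let f, g : E → ℝ be L-smooth with inf_x (f(x) + g(x)) > −∞. Define 𝓛(x, z, μ) := f(x) + g(z) + ⟨μ, x − z⟩ + (ρ/2)‖x − z‖². Let sequences (x_k), (z_k), (μ_k) in E and nonnegative reals (δ_k), (Δ_k) with ∑_k δ_k < ∞ and ∑_k Δ_k² < ∞ satisfy, for every k ≥ 0: (i) 𝓛(x_{k+1}, z_k, μ_k) ≤ inf_x 𝓛(x, z_k, μ_k) + δ_k; (ii) ‖z_{k+1} − z_{k+1}*‖ ≤ Δ_k, where z_{k+1}* is the unique minimizer of z ↦ 𝓛(x_{k+1}, z, μ_k); (iii) μ_{k+1} = μ_k + ρ(x_{k+1} − z_{k+1}); and additionally there exists z_0* ∈ E with ∇g(z_0*) = μ_0 + ρ(z_0 − z_0*) and ‖z_0 − z_0*‖ ≤ Δ_0. Then ‖x_{k+1} − x_k‖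 → 0, ‖z_{k+1} − z_k‖ → 0, ‖μ_{k+1} − μ_k‖ → 0, and the residuals converge at a sublinear rate: k · min_{0 ≤ j ≤ k} (‖z_{j+1} − z_j‖² + ‖x_{j+1} − x_j‖²) → 0, i.e. min_{0 ≤ j ≤ k} (‖z_{j+1} − z_j‖² + ‖x_{j+1} − x_j‖²) = o(1/k). -/
open scoped RealInnerProductSpace
open Filter

section Helpers
variable {E : Type*} [NormedAddCommGroup E] [InnerProductSpace ℝ E]

lemma upper_descent {φ : E → ℝ} {φ' : E → E} {L : ℝ}
    (hdiff : ∀ w, HasFDerivAt φ (innerSL ℝ (φ' w)) w)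
    (hlip : ∀ w v, ‖φ' w - φ' v‖ ≤ L * ‖w - v‖) (a b : E) :
    φ b ≤ φ a + ⟪φ' a, b - a⟫ + L / 2 * ‖b - a‖ ^ 2 := by
  set v := b - a with hv
  set h : ℝ → ℝ := fun t => φ (a + t • v) - t * ⟪φ' a, v⟫ - L / 2 * t ^ 2 * ‖v‖ ^ 2 with hh
  have hd : ∀ t : ℝ, HasDerivAt h (⟪φ' (a + t • v), v⟫ - ⟪φ' a, v⟫ - L * t * ‖v‖ ^ 2) t := by
    intro t
    have line : HasDerivAt (fun t : ℝ => a + t • v) v t := by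
      simpa using ((hasDerivAt_id t).smul_const v).const_add a
    have h1 : HasDerivAt (fun t : ℝ => φ (a + t • v)) (⟪φ' (a + t • v), v⟫) t := by
      simpa [Function.comp_def] using (hdiff (a + t • v)).comp_hasDerivAt t line
    have h2 : HasDerivAt (fun t : ℝ => t * ⟪φ' a, v⟫) (⟪φ' a, v⟫) t := by
      simpa using (hasDerivAt_id t).mul_const (⟪φ' a, v⟫)
    have h3 : HasDerivAt (fun t : ℝ => L / 2 * t ^ 2 * ‖v‖ ^ 2) (L * t * ‖v‖ ^ 2) t := by
      have := ((hasDerivAt_pow 2 t).const_mul (L / 2)).mul_const (‖v‖ ^ 2)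
      refine this.congr_deriv ?_
      rw [show (2:ℕ) - 1 = 1 from rfl, pow_one]
      push_cast
      ring
    exact (h1.sub h2).sub h3
  have key : h 1 ≤ h 0 := by
    have cont : ContinuousOn h (Set.Icc 0 1) := fun t _ => (hd t).continuousAt.continuousWithinAt
    have hanti : AntitoneOn h (Set.Icc (0:ℝ) 1) := by
      apply antitoneOn_of_deriv_nonpos (convex_Icc 0 1) cont
      · intro t ht
        exact ((hd t).differentiableAt).differentiableWithinAt
      · intro t ht
        rw [interior_Icc] at ht
        rw [(hd t).deriv]
        have hb : ⟪φ' (a + t • v) - φ' a, v⟫ ≤ ‖φ' (a + t • v) - φ' a‖ * ‖v‖ :=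
          real_inner_le_norm _ _
        have hl : ‖φ' (a + t • v) - φ' a‖ ≤ L * (t * ‖v‖) := by
          have := hlip (a + t • v) a
          simpa [norm_smul, abs_of_nonneg ht.1.le] using this
        have hvn : (0:ℝ) ≤ ‖v‖ := norm_nonneg _
        nlinarith [inner_sub_left (𝕜 := ℝ) (φ' (a + t • v)) (φ' a) v]
    exact hanti (Set.left_mem_Icc.2 zero_le_one) (Set.right_mem_Icc.2 zero_le_one) zero_le_one
  have h10 : φ (a + v) - ⟪φ' a, v⟫ - L / 2 * ‖v‖ ^ 2 ≤ φ a := by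
    simpa [hh] using key
  have hab : a + v = b := by rw [hv]; abel
  rw [hab] at h10
  linarith

lemma lower_descent {φ : E → ℝ} {φ' : E → E} {L : ℝ}
    (hdiff : ∀ w, HasFDerivAt φ (innerSL ℝ (φ' w)) w)
    (hlip : ∀ w v, ‖φ' w - φ' v‖ ≤ L * ‖w - v‖) (a b : E) :
    φ a + ⟪φ' a, b - a⟫ - L / 2 * ‖b - a‖ ^ 2 ≤ φ b := by
  have hd : ∀ w, HasFDerivAt (fun u => -φ u) (innerSL ℝ (-φ' w)) w := by
    intro w
    rw [map_neg]; exact (hdiff w).neg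
  have hl : ∀ w v, ‖-φ' w - -φ' v‖ ≤ L * ‖w - v‖ := by
    intro w v
    have h : -φ' w - -φ' v = -(φ' w - φ' v) := by abel
    rw [h, norm_neg]; exact hlip w v
  have := upper_descent hd hl a b
  simp only [inner_neg_left] at this
  linarith

lemma quad_expand (μ c : E) (ρ : ℝ) (x y : E) :
    ⟪μ, y - c⟫ + ρ / 2 * ‖y - c‖ ^ 2
      = ⟪μ, x - c⟫ + ρ / 2 * ‖x - c‖ ^ 2 + ⟪μ + ρ • (x - c), y - x⟫ + ρ / 2 * ‖y - x‖ ^ 2 := by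
  have h : y - c = (x - c) + (y - x) := by abel
  rw [h, ← real_inner_self_eq_norm_sq, ← real_inner_self_eq_norm_sq, ← real_inner_self_eq_norm_sq]
  simp only [inner_add_add_self, inner_add_left, inner_add_right, inner_smul_left,
    RCLike.ofReal_real_eq_id, id, real_inner_comm (y - x) (x - c), conj_trivial]
  ring

lemma small_grad {F : E → ℝ} {G : E → E} {M δ : ℝ} (hM : 0 < M)
    (hud : ∀ a b, F b ≤ F a + ⟪G a, b - a⟫ + M / 2 * ‖b - a‖ ^ 2)
    {m : E} (hmin : ∀ w, F m ≤ F w + δ) : ‖G m‖ ^ 2 ≤ 2 * M * δ := by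
  have h := hud m (m - (1 / M) • G m)
  have h2 := hmin (m - (1 / M) • G m)
  have e1 : m - (1 / M) • G m - m = -((1 / M) • G m) := by abel
  rw [e1] at h
  rw [inner_neg_right, real_inner_smul_right, real_inner_self_eq_norm_sq, norm_neg,
    norm_smul] at h
  rw [Real.norm_eq_abs, abs_of_pos (show (0:ℝ) < 1 / M by positivity), mul_pow] at h
  have hM' : M ≠ 0 := ne_of_gt hM
  have hq : M / 2 * ((1 / M) ^ 2 * ‖G m‖ ^ 2) = ‖G m‖ ^ 2 / (2 * M) := by
    field_simp
  rw [hq] at h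
  have hq2 : (1 / M) * ‖G m‖ ^ 2 = 2 * (‖G m‖ ^ 2 / (2 * M)) := by field_simp
  have : ‖G m‖ ^ 2 / (2 * M) ≤ δ := by linarith
  calc ‖G m‖ ^ 2 = (2 * M) * (‖G m‖ ^ 2 / (2 * M)) := by field_simp
    _ ≤ 2 * M * δ := by nlinarith

lemma quad_ud {φ : E → ℝ} {φ' : E → E} {L : ℝ}
    (hdiff : ∀ w, HasFDerivAt φ (innerSL ℝ (φ' w)) w)
    (hlip : ∀ w v, ‖φ' w - φ' v‖ ≤ L * ‖w - v‖) (μ0 c : E) (ρ C : ℝ) (a b : E) :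
    φ b + C + ⟪μ0, b - c⟫ + ρ / 2 * ‖b - c‖ ^ 2
      ≤ (φ a + C + ⟪μ0, a - c⟫ + ρ / 2 * ‖a - c‖ ^ 2)
        + ⟪φ' a + (μ0 + ρ • (a - c)), b - a⟫ + (L + ρ) / 2 * ‖b - a‖ ^ 2 := by
  have h1 := upper_descent hdiff hlip a b
  have h2 := quad_expand μ0 c ρ a b
  rw [inner_add_left]
  nlinarith [sq_nonneg ‖b - a‖]

lemma quad_ld {φ : E → ℝ} {φ' : E → E} {L : ℝ}
    (hdiff : ∀ w, HasFDerivAt φ (innerSL ℝ (φ' w)) w)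
    (hlip : ∀ w v, ‖φ' w - φ' v‖ ≤ L * ‖w - v‖) (μ0 c : E) (ρ C : ℝ) (a b : E) :
    (φ a + C + ⟪μ0, a - c⟫ + ρ / 2 * ‖a - c‖ ^ 2)
        + ⟪φ' a + (μ0 + ρ • (a - c)), b - a⟫ + (ρ - L) / 2 * ‖b - a‖ ^ 2
      ≤ φ b + C + ⟪μ0, b - c⟫ + ρ / 2 * ‖b - c‖ ^ 2 := by
  have h1 := lower_descent hdiff hlip a b
  have h2 := quad_expand μ0 c ρ a b
  rw [inner_add_left]
  nlinarith [sq_nonneg ‖b - a‖]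

lemma young {a b c : ℝ} (hc : 0 < c) : a * b ≤ a ^ 2 / (2 * c) + c / 2 * b ^ 2 := by
  have h2 : a * b * (2 * c) ≤ a ^ 2 + c ^ 2 * b ^ 2 := by nlinarith [sq_nonneg (a - c * b)]
  calc a * b = (a * b * (2 * c)) / (2 * c) := by field_simp
    _ ≤ (a ^ 2 + c ^ 2 * b ^ 2) / (2 * c) := by
        gcongr
    _ = a ^ 2 / (2 * c) + c / 2 * b ^ 2 := by field_simp

lemma telescope_aux {a r : ℕ → ℝ} (h : ∀ k, a (k + 1) + r k ≤ a k) :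
    ∀ n, a n + ∑ k ∈ Finset.range n, r k ≤ a 0 := by
  intro n
  induction n with
  | zero => simp
  | succ n ih =>
    rw [Finset.sum_range_succ]
    have := h n
    linarith

lemma sq_tendsto_zero {a : ℕ → ℝ} (h : ∀ k, 0 ≤ a k)
    (h2 : Tendsto (fun k => a k ^ 2) atTop (nhds 0)) : Tendsto a atTop (nhds 0) := by
  have hs : Tendsto (fun k => Real.sqrt (a k ^ 2)) atTop (nhds 0) := by
    have := (Real.continuous_sqrt.tendsto 0).comp h2
    simpa [Function.comp_def] using this
  exact hs.congr fun k => Real.sqrt_sq (h k)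

lemma min_o_inv {s : ℕ → ℝ} (hs : ∀ k, 0 ≤ s k) (hsum : Summable s) :
    Tendsto (fun k : ℕ => (k : ℝ) *
      (Finset.range (k + 1)).inf' Finset.nonempty_range_add_one s) atTop (nhds 0) := by
  set T : ℕ → ℝ := fun m => (∑' i, s i) - ∑ i ∈ Finset.range m, s i with hT
  have hTtend : Tendsto T atTop (nhds 0) := by
    have := Tendsto.const_sub (∑' i, s i) hsum.hasSum.tendsto_sum_nat
    simpa [hT] using this
  have hinf_nonneg : ∀ k : ℕ, 0 ≤ (Finset.range (k + 1)).inf' Finset.nonempty_range_add_one s :=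
    fun k => Finset.le_inf' _ _ (fun j _ => hs j)
  have hbound : ∀ k : ℕ, (k : ℝ) * (Finset.range (k + 1)).inf' Finset.nonempty_range_add_one s
      ≤ 2 * T (k / 2) := by
    intro k
    set m := k / 2 with hm
    set b := (Finset.range (k + 1)).inf' Finset.nonempty_range_add_one s with hb
    have hcard : (Finset.Icc m k).card = k + 1 - m := Nat.card_Icc m k
    have hsub : Finset.Icc m k ⊆ Finset.range (k + 1) := by
      intro j hj
      simp only [Finset.mem_Icc] at hj
      simpa [Finset.mem_range] using Nat.lt_succ_of_le hj.2
    have h1 : (Finset.Icc m k).card • b ≤ ∑ j ∈ Finset.Icc m k, s j :=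
      Finset.card_nsmul_le_sum _ _ _ (fun j hj => Finset.inf'_le _ (hsub hj))
    have h2 : ∑ j ∈ Finset.Icc m k, s j ≤ T m := by
      have hIcc : Finset.Icc m k = Finset.Ico m (k + 1) := by
        ext j; simp [Nat.lt_succ_iff]
      have hmk : m ≤ k + 1 := by omega
      have hsplit : ∑ i ∈ Finset.range (k + 1), s i
          = ∑ i ∈ Finset.range m, s i + ∑ j ∈ Finset.Ico m (k + 1), s j := by
        rw [Finset.range_eq_Ico, ← Finset.sum_Ico_consecutive _ (Nat.zero_le m) hmk,
          ← Finset.range_eq_Ico]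
      have hle : ∑ i ∈ Finset.range (k + 1), s i ≤ ∑' i, s i :=
        Summable.sum_le_tsum _ (fun i _ => hs i) hsum
      rw [hIcc]
      simp only [hT]
      linarith
    have hksmall : (k : ℝ) ≤ 2 * ((k + 1 - m : ℕ) : ℝ) := by
      have : k ≤ 2 * (k + 1 - m) := by omega
      exact_mod_cast this
    have h1' : ((k + 1 - m : ℕ) : ℝ) * b ≤ T m := by
      rw [hcard] at h1
      simpa [nsmul_eq_mul] using h1.trans h2
    have hbnn : 0 ≤ b := hinf_nonneg k
    nlinarith [mul_nonneg (Nat.cast_nonneg (k + 1 - m) : (0:ℝ) ≤ _) hbnn]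
  have hdiv : Tendsto (fun k : ℕ => k / 2) atTop atTop := by
    apply tendsto_atTop_atTop.2
    intro b
    exact ⟨2 * b, fun a ha => by omega⟩
  have h2T : Tendsto (fun k : ℕ => 2 * T (k / 2)) atTop (nhds 0) := by
    have := (hTtend.comp hdiv).const_mul (2 : ℝ)
    simpa using this
  exact squeeze_zero (fun k => mul_nonneg (Nat.cast_nonneg k) (hinf_nonneg k)) hbound h2T

end Helpers
set_option maxHeartbeats 2000000 in
/-- Theorem 2 of the paper (convergence of the inexact ADMM underlying Algorithm 1): the
successive differences of the primal and dual iterates vanish, and the running minimum of the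
squared residuals decays at rate `o(1/k)`. -/
theorem stmt_17 (d : ℕ) (L ρ : ℝ) (hL : 0 < L) (hρ : 6 * L + 2 ≤ ρ)
    (f g : EuclideanSpace ℝ (Fin d) → ℝ)
    (f' g' : EuclideanSpace ℝ (Fin d) → EuclideanSpace ℝ (Fin d))
    (hfdiff : ∀ w, HasFDerivAt f (innerSL ℝ (f' w)) w)
    (hflip : ∀ w v, ‖f' w - f' v‖ ≤ L * ‖w - v‖)
    (hgdiff : ∀ w, HasFDerivAt g (innerSL ℝ (g' w)) w)
    (hglip : ∀ w v, ‖g' w - g' v‖ ≤ L * ‖w - v‖)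
    (hbdd : BddBelow (Set.range fun x => f x + g x))
    (x z μ : ℕ → EuclideanSpace ℝ (Fin d))
    (δ Δ : ℕ → ℝ) (hδ : ∀ k, 0 ≤ δ k) (hΔ : ∀ k, 0 ≤ Δ k)
    (hδsum : Summable δ) (hΔsum : Summable fun k => Δ k ^ 2)
    -- (i) inexact x-update
    (hx : ∀ k, ∀ w, augLagr f g ρ (x (k + 1)) (z k) (μ k) ≤
        augLagr f g ρ w (z k) (μ k) + δ k)
    -- (ii) inexact z-update: `z (k+1)` is within `Δ k` of the exact minimizer
    (hz : ∀ k, ∃ zs, (∀ w, augLagr f g ρ (x (k + 1)) zs (μ k) ≤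
        augLagr f g ρ (x (k + 1)) w (μ k)) ∧ ‖z (k + 1) - zs‖ ≤ Δ k)
    -- (iii) dual update
    (hμ : ∀ k, μ (k + 1) = μ k + ρ • (x (k + 1) - z (k + 1)))
    -- initial condition on z₀
    (hz0 : ∃ z0s, g' z0s = μ 0 + ρ • (z 0 - z0s) ∧ ‖z 0 - z0s‖ ≤ Δ 0) :
    Tendsto (fun k : ℕ => ‖x (k + 1) - x k‖) atTop (nhds 0) ∧
      Tendsto (fun k : ℕ => ‖z (k + 1) - z k‖) atTop (nhds 0) ∧
      Tendsto (fun k : ℕ => ‖μ (k + 1) - μ k‖) atTop (nhds 0) ∧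
      Tendsto (fun k : ℕ => (k : ℝ) *
          (Finset.range (k + 1)).inf' Finset.nonempty_range_add_one
            (fun j => ‖z (j + 1) - z j‖ ^ 2 + ‖x (j + 1) - x j‖ ^ 2))
        atTop (nhds 0) := by
  obtain ⟨c, hc⟩ := hbdd
  have hc' : ∀ w, c ≤ f w + g w := fun w => hc (Set.mem_range_self w)
  have hρpos : (0:ℝ) < ρ := by linarith
  set M := L + ρ with hM
  set σ := ρ - L with hσ
  have hMpos : 0 < M := by rw [hM]; linarith
  have hσ2 : (2:ℝ) ≤ σ := by rw [hσ]; linarith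
  have hσpos : 0 < σ := by linarith
  -- choose the exact minimizers of the z-subproblems
  choose zsf hzsf1 hzsf2 using hz
  obtain ⟨z0s, hz0g, hz0d⟩ := hz0
  set zs : ℕ → EuclideanSpace ℝ (Fin d) := fun k => Nat.rec z0s (fun j _ => zsf j) k with hzs
  have hzs0 : zs 0 = z0s := rfl
  have hzsS : ∀ k, zs (k + 1) = zsf k := fun k => rfl
  set e : ℕ → ℝ := fun k => ‖z k - zs k‖ with he
  have he_nonneg : ∀ k, 0 ≤ e k := fun k => norm_nonneg _
  set Δp : ℕ → ℝ := fun k => Δ (k - 1) with hΔp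
  have heΔ : ∀ k, e k ≤ Δp k := by
    intro k
    cases k with
    | zero => simpa [he, hzs0, hΔp] using hz0d
    | succ j => simpa [he, hzsS, hΔp] using hzsf2 j
  have hΔp_nonneg : ∀ k, 0 ≤ Δp k := fun k => hΔ _
  have hΔpsum : Summable (fun k => Δp k ^ 2) := by
    apply (summable_nat_add_iff 1).mp
    simpa [hΔp] using hΔsum
  clear_value M σ zs e Δp
  -- upper/lower quadratic bounds for the x-slot
  have hudx : ∀ (cz μ0 a b : EuclideanSpace ℝ (Fin d)),
      augLagr f g ρ b cz μ0 ≤ augLagr f g ρ a cz μ0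
      + ⟪f' a + (μ0 + ρ • (a - cz)), b - a⟫ + M / 2 * ‖b - a‖ ^ 2 := by
    intro cz μ0 a b
    rw [hM]
    simpa only [augLagr] using quad_ud hfdiff hflip μ0 cz ρ (g cz) a b
  have hldx : ∀ (cz μ0 a b : EuclideanSpace ℝ (Fin d)),
      augLagr f g ρ a cz μ0
      + ⟪f' a + (μ0 + ρ • (a - cz)), b - a⟫ + σ / 2 * ‖b - a‖ ^ 2 ≤ augLagr f g ρ b cz μ0 := by
    intro cz μ0 a b
    rw [hσ]
    simpa only [augLagr] using quad_ld hfdiff hflip μ0 cz ρ (g cz) a b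
  -- rewriting the augmented Lagrangian as a function of the z-slot
  have augz : ∀ (p w μ0 : EuclideanSpace ℝ (Fin d)), augLagr f g ρ p w μ0
      = g w + f p + ⟪-μ0, w - p⟫ + ρ / 2 * ‖w - p‖ ^ 2 := by
    intro p w μ0
    have h1 : ⟪μ0, p - w⟫ = -⟪μ0, w - p⟫ := by
      rw [show p - w = -(w - p) from by abel, inner_neg_right]
    simp only [augLagr, h1, inner_neg_left, norm_sub_rev p w]
    ring
  have hudz : ∀ (p μ0 a b : EuclideanSpace ℝ (Fin d)),
      augLagr f g ρ p b μ0 ≤ augLagr f g ρ p a μ0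
      + ⟪g' a + (-μ0 + ρ • (a - p)), b - a⟫ + M / 2 * ‖b - a‖ ^ 2 := by
    intro p μ0 a b
    rw [augz p b μ0, augz p a μ0, hM]
    exact quad_ud hgdiff hglip (-μ0) p ρ (f p) a b
  have hldz : ∀ (p μ0 a b : EuclideanSpace ℝ (Fin d)),
      augLagr f g ρ p a μ0
      + ⟪g' a + (-μ0 + ρ • (a - p)), b - a⟫ + σ / 2 * ‖b - a‖ ^ 2 ≤ augLagr f g ρ p b μ0 := by
    intro p μ0 a b
    rw [augz p b μ0, augz p a μ0, hσ]
    exact quad_ld hgdiff hglip (-μ0) p ρ (f p) a b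
  -- first-order condition at the exact z-minimizers
  have hgradz : ∀ k, g' (zs (k + 1)) + (-μ k + ρ • (zs (k + 1) - x (k + 1))) = 0 := by
    intro k
    have hmin : ∀ w, augLagr f g ρ (x (k + 1)) (zs (k + 1)) (μ k)
        ≤ augLagr f g ρ (x (k + 1)) w (μ k) + 0 := by
      intro w
      simpa [hzsS] using hzsf1 k w
    have hsg := small_grad (F := fun w => augLagr f g ρ (x (k + 1)) w (μ k))
      (G := fun w => g' w + (-μ k + ρ • (w - x (k + 1)))) hMpos
      (fun a b => hudz (x (k + 1)) (μ k) a b) hmin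
    have h0 : ‖g' (zs (k + 1)) + (-μ k + ρ • (zs (k + 1) - x (k + 1)))‖ ^ 2 ≤ 0 := by
      simpa using hsg
    have h1 : ‖g' (zs (k + 1)) + (-μ k + ρ • (zs (k + 1) - x (k + 1)))‖ = 0 := by
      nlinarith [norm_nonneg (g' (zs (k + 1)) + (-μ k + ρ • (zs (k + 1) - x (k + 1))))]
    exact norm_eq_zero.mp h1
  have hgs : ∀ k, g' (zs k) = μ k + ρ • (z k - zs k) := by
    intro k
    cases k with
    | zero => simpa [hzs0] using hz0g
    | succ j =>
      have h2 := eq_neg_of_add_eq_zero_left (hgradz j)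
      rw [h2, hμ j, smul_sub, smul_sub, smul_sub]
      abel
  -- the dual bound
  have hmub : ∀ k, ‖μ (k + 1) - μ k‖ ≤ L * ‖z (k + 1) - z k‖ + M * (e k + e (k + 1)) := by
    intro k
    have hmu1 : μ k = g' (zs k) - ρ • (z k - zs k) := by rw [hgs k]; abel
    have hmu2 : μ (k + 1) = g' (zs (k + 1)) - ρ • (z (k + 1) - zs (k + 1)) := by
      rw [hgs (k + 1)]; abel
    have hdf : μ (k + 1) - μ k = (g' (zs (k + 1)) - g' (zs k))
        + (ρ • (z k - zs k) - ρ • (z (k + 1) - zs (k + 1))) := by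
      rw [hmu1, hmu2]; abel
    have t1 : ‖μ (k + 1) - μ k‖ ≤ ‖g' (zs (k + 1)) - g' (zs k)‖
        + (‖ρ • (z k - zs k)‖ + ‖ρ • (z (k + 1) - zs (k + 1))‖) := by
      rw [hdf]
      exact (norm_add_le _ _).trans (by gcongr; exact norm_sub_le _ _)
    have t2 : ‖g' (zs (k + 1)) - g' (zs k)‖ ≤ L * ‖zs (k + 1) - zs k‖ := hglip _ _
    have t3 : ‖zs (k + 1) - zs k‖ ≤ e (k + 1) + ‖z (k + 1) - z k‖ + e k := by
      have := dist_triangle4 (zs (k + 1)) (z (k + 1)) (z k) (zs k)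
      simp only [dist_eq_norm] at this
      calc ‖zs (k + 1) - zs k‖ ≤ ‖zs (k + 1) - z (k + 1)‖ + ‖z (k + 1) - z k‖ + ‖z k - zs k‖ := this
        _ = e (k + 1) + ‖z (k + 1) - z k‖ + e k := by
            rw [norm_sub_rev (zs (k + 1)) (z (k + 1))]; simp [he]
    have t4 : ‖ρ • (z k - zs k)‖ = ρ * e k := by
      simp [norm_smul, abs_of_pos hρpos, he]
    have t5 : ‖ρ • (z (k + 1) - zs (k + 1))‖ = ρ * e (k + 1) := by
      simp [norm_smul, abs_of_pos hρpos, he]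
    have hzd : 0 ≤ ‖z (k + 1) - z k‖ := norm_nonneg _
    have hM' : ρ ≤ M := by rw [hM]; linarith
    nlinarith [he_nonneg k, he_nonneg (k + 1), mul_le_mul_of_nonneg_left t3 hL.le]
  -- coefficient facts
  have hcoef1 : 2 * L ^ 2 / ρ ≤ σ / 2 - 1 := by
    rw [div_le_iff₀ hρpos, hσ]
    have hh1 : L * (6 * L + 2) ≤ L * ρ := mul_le_mul_of_nonneg_left hρ hL.le
    have hh2 : (6 * L + 2) * ρ ≤ ρ * ρ := mul_le_mul_of_nonneg_right hρ hρpos.le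
    nlinarith
  have hcoef2 : (1:ℝ) / 2 ≤ σ / 4 := by linarith
  -- per-iteration key inequality
  have key : ∀ k, augLagr f g ρ (x (k + 1)) (z (k + 1)) (μ (k + 1))
      + ((1/2) * (‖x (k + 1) - x k‖ ^ 2 + ‖z k - zs (k + 1)‖ ^ 2)
        - ((2 * M / σ) * δ k + M / 2 * Δ k ^ 2 + (16 * M ^ 2 / ρ) * (Δp k ^ 2 + Δ k ^ 2)))
      ≤ augLagr f g ρ (x k) (z k) (μ k) := by
    intro k
    -- x-step
    have hsgx : ‖f' (x (k + 1)) + (μ k + ρ • (x (k + 1) - z k))‖ ^ 2 ≤ 2 * M * δ k :=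
      small_grad (F := fun w => augLagr f g ρ w (z k) (μ k))
        (G := fun w => f' w + (μ k + ρ • (w - z k))) hMpos
        (fun a b => hudx (z k) (μ k) a b) (fun w => hx k w)
    have hldxk := hldx (z k) (μ k) (x (k + 1)) (x k)
    have hip : -(‖f' (x (k + 1)) + (μ k + ρ • (x (k + 1) - z k))‖ * ‖x k - x (k + 1)‖)
        ≤ ⟪f' (x (k + 1)) + (μ k + ρ • (x (k + 1) - z k)), x k - x (k + 1)⟫ := by
      have h := real_inner_le_norm (-(f' (x (k + 1)) + (μ k + ρ • (x (k + 1) - z k)))) (x k - x (k + 1))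
      rw [inner_neg_left, norm_neg] at h
      linarith
    have hyoung : ‖f' (x (k + 1)) + (μ k + ρ • (x (k + 1) - z k))‖ * ‖x k - x (k + 1)‖
        ≤ ‖f' (x (k + 1)) + (μ k + ρ • (x (k + 1) - z k))‖ ^ 2 / (2 * (σ / 2))
          + (σ / 2) / 2 * ‖x k - x (k + 1)‖ ^ 2 :=
      young (by positivity)
    rw [show (2:ℝ) * (σ / 2) = σ by ring] at hyoung
    have hb : ‖x k - x (k + 1)‖ = ‖x (k + 1) - x k‖ := norm_sub_rev _ _
    have hgdiv : ‖f' (x (k + 1)) + (μ k + ρ • (x (k + 1) - z k))‖ ^ 2 / σ ≤ 2 * M * δ k / σ :=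
      (div_le_div_iff_of_pos_right hσpos).2 hsgx
    have stepx : augLagr f g ρ (x (k + 1)) (z k) (μ k)
        ≤ augLagr f g ρ (x k) (z k) (μ k) - σ / 4 * ‖x (k + 1) - x k‖ ^ 2 + (2 * M / σ) * δ k := by
      rw [hb] at hldxk hyoung hip
      have heq2 : 2 * M * δ k / σ = (2 * M / σ) * δ k := by ring
      linarith
    -- z-step
    have hg0 := hgradz k
    have hldzk := hldz (x (k + 1)) (μ k) (zs (k + 1)) (z k)
    have hudzk := hudz (x (k + 1)) (μ k) (zs (k + 1)) (z (k + 1))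
    rw [hg0] at hldzk hudzk
    simp only [inner_zero_left] at hldzk hudzk
    have hz1 : ‖z (k + 1) - zs (k + 1)‖ ≤ Δ k := by rw [hzsS k]; exact hzsf2 k
    have hz1sq : ‖z (k + 1) - zs (k + 1)‖ ^ 2 ≤ Δ k ^ 2 :=
      pow_le_pow_left₀ (norm_nonneg _) hz1 2
    have hz1sq' := mul_le_mul_of_nonneg_left hz1sq (show (0:ℝ) ≤ M / 2 by linarith)
    have stepz : augLagr f g ρ (x (k + 1)) (z (k + 1)) (μ k)
        ≤ augLagr f g ρ (x (k + 1)) (z k) (μ k) - σ / 2 * ‖z k - zs (k + 1)‖ ^ 2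
          + M / 2 * Δ k ^ 2 := by linarith
    -- μ-step
    have stepmu : augLagr f g ρ (x (k + 1)) (z (k + 1)) (μ (k + 1))
        = augLagr f g ρ (x (k + 1)) (z (k + 1)) (μ k) + ρ * ‖x (k + 1) - z (k + 1)‖ ^ 2 := by
      simp only [augLagr, hμ k, inner_add_left, real_inner_smul_left, real_inner_self_eq_norm_sq]
      ring
    -- dual bound
    have hzd2 : ‖z (k + 1) - z k‖ ≤ ‖z k - zs (k + 1)‖ + Δ k := by
      have tri := dist_triangle (z (k + 1)) (zs (k + 1)) (z k)
      simp only [dist_eq_norm] at tri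
      have h3 : ‖zs (k + 1) - z k‖ = ‖z k - zs (k + 1)‖ := norm_sub_rev _ _
      linarith
    have hmu3 : ‖μ (k + 1) - μ k‖ ≤ L * ‖z k - zs (k + 1)‖ + 2 * M * (Δp k + Δ k) := by
      have he1 : e k ≤ Δp k := heΔ k
      have he2 : e (k + 1) ≤ Δ k := by simpa [hΔp] using heΔ (k + 1)
      have hLM : L ≤ M := by rw [hM]; linarith
      have p1 := mul_le_mul_of_nonneg_left hzd2 hL.le
      have p2 := mul_le_mul_of_nonneg_left (add_le_add he1 he2) hMpos.le
      have p3 := mul_le_mul_of_nonneg_right hLM (hΔ k)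
      have p4 : 0 ≤ M * Δp k := mul_nonneg hMpos.le (hΔp_nonneg k)
      have h := hmub k
      linarith
    have hrel : ρ * ‖x (k + 1) - z (k + 1)‖ ^ 2
        ≤ 2 * L ^ 2 / ρ * ‖z k - zs (k + 1)‖ ^ 2 + (16 * M ^ 2 / ρ) * (Δp k ^ 2 + Δ k ^ 2) := by
      have h1 : ‖μ (k + 1) - μ k‖ = ρ * ‖x (k + 1) - z (k + 1)‖ := by
        rw [hμ k]
        simp [norm_smul, abs_of_pos hρpos]
      have h2 : ‖μ (k + 1) - μ k‖ ^ 2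
          ≤ 2 * L ^ 2 * ‖z k - zs (k + 1)‖ ^ 2 + 16 * M ^ 2 * (Δp k ^ 2 + Δ k ^ 2) := by
        have hsq := pow_le_pow_left₀ (norm_nonneg (μ (k + 1) - μ k)) hmu3 2
        nlinarith [sq_nonneg (L * ‖z k - zs (k + 1)‖ - 2 * M * (Δp k + Δ k)),
          sq_nonneg (M * (Δp k - Δ k))]
      have h3 : ρ * ‖x (k + 1) - z (k + 1)‖ ^ 2 = ‖μ (k + 1) - μ k‖ ^ 2 / ρ := by
        rw [h1]; field_simp
      rw [h3]
      calc ‖μ (k + 1) - μ k‖ ^ 2 / ρ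
          ≤ (2 * L ^ 2 * ‖z k - zs (k + 1)‖ ^ 2 + 16 * M ^ 2 * (Δp k ^ 2 + Δ k ^ 2)) / ρ :=
            (div_le_div_iff_of_pos_right hρpos).2 h2
        _ = 2 * L ^ 2 / ρ * ‖z k - zs (k + 1)‖ ^ 2 + (16 * M ^ 2 / ρ) * (Δp k ^ 2 + Δ k ^ 2) := by
            ring
    have hcoefq := mul_le_mul_of_nonneg_right hcoef1 (sq_nonneg ‖z k - zs (k + 1)‖)
    have hcoefx := mul_le_mul_of_nonneg_right hcoef2 (sq_nonneg ‖x (k + 1) - x k‖)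
    linarith [sq_nonneg ‖z k - zs (k + 1)‖]
  -- lower bound on the augmented Lagrangian along the iterates
  have hM2σ : (0:ℝ) ≤ M ^ 2 / (2 * σ) := div_nonneg (sq_nonneg M) (by linarith)
  have hLlow : ∀ n, c - M ^ 2 / (2 * σ) * Δp n ^ 2 ≤ augLagr f g ρ (x n) (z n) (μ n) := by
    intro n
    have hgub := upper_descent hgdiff hglip (z n) (x n)
    have hmun : μ n = g' (zs n) - ρ • (z n - zs n) := by rw [hgs n]; abel
    have hnb : ‖μ n - g' (z n)‖ ≤ M * e n := by
      have hre : μ n - g' (z n) = (g' (zs n) - g' (z n)) - ρ • (z n - zs n) := by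
        rw [hmun]; abel
      rw [hre]
      have h1 : ‖g' (zs n) - g' (z n)‖ ≤ L * e n := by
        have h := hglip (zs n) (z n)
        rw [norm_sub_rev (zs n) (z n)] at h
        simpa [he] using h
      have h2 : ‖ρ • (z n - zs n)‖ = ρ * e n := by
        simp [he, norm_smul, abs_of_pos hρpos]
      calc ‖g' (zs n) - g' (z n) - ρ • (z n - zs n)‖
          ≤ ‖g' (zs n) - g' (z n)‖ + ‖ρ • (z n - zs n)‖ := norm_sub_le _ _
        _ ≤ L * e n + ρ * e n := by rw [h2]; linarith
        _ = M * e n := by rw [hM]; ring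
    have hipb : -(M * e n * ‖x n - z n‖) ≤ ⟪μ n - g' (z n), x n - z n⟫ := by
      have h := real_inner_le_norm (-(μ n - g' (z n))) (x n - z n)
      rw [inner_neg_left, norm_neg] at h
      have h2 := mul_le_mul_of_nonneg_right hnb (norm_nonneg (x n - z n))
      linarith
    have hyg : M * e n * ‖x n - z n‖ ≤ (M * e n) ^ 2 / (2 * σ) + σ / 2 * ‖x n - z n‖ ^ 2 :=
      young hσpos
    rw [show (M * e n) ^ 2 / (2 * σ) = M ^ 2 / (2 * σ) * e n ^ 2 by ring] at hyg
    have hinner := inner_sub_left (𝕜 := ℝ) (μ n) (g' (z n)) (x n - z n)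
    have hcn := hc' (x n)
    have hesq : e n ^ 2 ≤ Δp n ^ 2 := pow_le_pow_left₀ (he_nonneg n) (heΔ n) 2
    have hmono : M ^ 2 / (2 * σ) * e n ^ 2 ≤ M ^ 2 / (2 * σ) * Δp n ^ 2 :=
      mul_le_mul_of_nonneg_left hesq hM2σ
    have hst : σ / 2 * ‖x n - z n‖ ^ 2 + L / 2 * ‖x n - z n‖ ^ 2
        = ρ / 2 * ‖x n - z n‖ ^ 2 := by rw [hσ]; ring
    simp only [augLagr]
    linarith
  -- telescoping
  have htel := telescope_aux (a := fun k => augLagr f g ρ (x k) (z k) (μ k))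
    (r := fun k => (1/2) * (‖x (k + 1) - x k‖ ^ 2 + ‖z k - zs (k + 1)‖ ^ 2)
      - ((2 * M / σ) * δ k + M / 2 * Δ k ^ 2 + (16 * M ^ 2 / ρ) * (Δp k ^ 2 + Δ k ^ 2))) key
  have hEb_nonneg : ∀ k, 0 ≤ (2 * M / σ) * δ k + M / 2 * Δ k ^ 2
      + (16 * M ^ 2 / ρ) * (Δp k ^ 2 + Δ k ^ 2) := by
    intro k
    have h1 : (0:ℝ) ≤ 2 * M / σ := div_nonneg (by linarith) hσpos.le
    have h2 : (0:ℝ) ≤ M / 2 := by linarith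
    have h3 : (0:ℝ) ≤ 16 * M ^ 2 / ρ := div_nonneg (by nlinarith [sq_nonneg M]) hρpos.le
    have := mul_nonneg h1 (hδ k)
    have := mul_nonneg h2 (sq_nonneg (Δ k))
    have := mul_nonneg h3 (add_nonneg (sq_nonneg (Δp k)) (sq_nonneg (Δ k)))
    linarith
  have hEbsum : Summable (fun k => (2 * M / σ) * δ k + M / 2 * Δ k ^ 2
      + (16 * M ^ 2 / ρ) * (Δp k ^ 2 + Δ k ^ 2)) := by
    apply Summable.add
    · exact (hδsum.mul_left _).add (hΔsum.mul_left _)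
    · exact (hΔpsum.add hΔsum).mul_left _
  have hΔple : ∀ n, Δp n ^ 2 ≤ ∑' k, Δp k ^ 2 :=
    fun n => Summable.le_tsum hΔpsum n (fun i _ => sq_nonneg _)
  have hKbound : ∀ n, ∑ k ∈ Finset.range n, (‖x (k + 1) - x k‖ ^ 2 + ‖z k - zs (k + 1)‖ ^ 2)
      ≤ 2 * (augLagr f g ρ (x 0) (z 0) (μ 0) - c + M ^ 2 / (2 * σ) * (∑' k, Δp k ^ 2)
        + ∑' k, ((2 * M / σ) * δ k + M / 2 * Δ k ^ 2
          + (16 * M ^ 2 / ρ) * (Δp k ^ 2 + Δ k ^ 2))) := by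
    intro n
    have h1 := htel n
    rw [Finset.sum_sub_distrib, ← Finset.mul_sum] at h1
    have h3 := Summable.sum_le_tsum (Finset.range n) (fun i (_ : i ∉ Finset.range n) => hEb_nonneg i) hEbsum
    have h4 := hLlow n
    have h6 := mul_le_mul_of_nonneg_left (hΔple n) hM2σ
    linarith
  have hrsum : Summable (fun k => ‖x (k + 1) - x k‖ ^ 2 + ‖z k - zs (k + 1)‖ ^ 2) :=
    summable_of_sum_range_le (fun k => add_nonneg (sq_nonneg _) (sq_nonneg _)) hKbound
  -- summability of the residuals
  have hsle : ∀ k, ‖z (k + 1) - z k‖ ^ 2 + ‖x (k + 1) - x k‖ ^ 2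
      ≤ 2 * Δ k ^ 2 + 2 * (‖x (k + 1) - x k‖ ^ 2 + ‖z k - zs (k + 1)‖ ^ 2) := by
    intro k
    have tri : ‖z (k + 1) - z k‖ ≤ Δ k + ‖z k - zs (k + 1)‖ := by
      have h := dist_triangle (z (k + 1)) (zs (k + 1)) (z k)
      simp only [dist_eq_norm] at h
      have h2 : ‖z (k + 1) - zs (k + 1)‖ ≤ Δ k := by rw [hzsS k]; exact hzsf2 k
      have h3 : ‖zs (k + 1) - z k‖ = ‖z k - zs (k + 1)‖ := norm_sub_rev _ _
      linarith
    have hsq := pow_le_pow_left₀ (norm_nonneg (z (k + 1) - z k)) tri 2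
    nlinarith [sq_nonneg (Δ k - ‖z k - zs (k + 1)‖)]
  have hsnn : ∀ k, (0:ℝ) ≤ ‖z (k + 1) - z k‖ ^ 2 + ‖x (k + 1) - x k‖ ^ 2 :=
    fun k => add_nonneg (sq_nonneg _) (sq_nonneg _)
  have hssum : Summable (fun k => ‖z (k + 1) - z k‖ ^ 2 + ‖x (k + 1) - x k‖ ^ 2) :=
    Summable.of_nonneg_of_le hsnn hsle ((hΔsum.mul_left 2).add (hrsum.mul_left 2))
  have hs0 : Tendsto (fun k => ‖z (k + 1) - z k‖ ^ 2 + ‖x (k + 1) - x k‖ ^ 2)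
      atTop (nhds 0) := hssum.tendsto_atTop_zero
  -- conclusions
  have hxten : Tendsto (fun k : ℕ => ‖x (k + 1) - x k‖) atTop (nhds 0) := by
    apply sq_tendsto_zero (fun k => norm_nonneg _)
    exact squeeze_zero (fun k => sq_nonneg _) (fun k => le_add_of_nonneg_left (sq_nonneg _)) hs0
  have hzten : Tendsto (fun k : ℕ => ‖z (k + 1) - z k‖) atTop (nhds 0) := by
    apply sq_tendsto_zero (fun k => norm_nonneg _)
    exact squeeze_zero (fun k => sq_nonneg _) (fun k => le_add_of_nonneg_right (sq_nonneg _)) hs0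
  have hΔ0 : Tendsto Δ atTop (nhds 0) := sq_tendsto_zero hΔ hΔsum.tendsto_atTop_zero
  have hΔp0 : Tendsto Δp atTop (nhds 0) := by
    have hsub : Tendsto (fun k : ℕ => k - 1) atTop atTop :=
      tendsto_atTop_atTop.2 (fun b => ⟨b + 1, fun a ha => by omega⟩)
    have h := hΔ0.comp hsub
    rw [hΔp]
    exact h
  have hμten : Tendsto (fun k : ℕ => ‖μ (k + 1) - μ k‖) atTop (nhds 0) := by
    have hbnd : ∀ k, ‖μ (k + 1) - μ k‖ ≤ L * ‖z (k + 1) - z k‖ + M * (Δp k + Δ k) := by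
      intro k
      have h := hmub k
      have h2 : e k + e (k + 1) ≤ Δp k + Δ k := by
        have h3 : e (k + 1) ≤ Δ k := by simpa [hΔp] using heΔ (k + 1)
        have h4 := heΔ k
        linarith
      have h5 := mul_le_mul_of_nonneg_left h2 hMpos.le
      linarith
    have hrhs : Tendsto (fun k => L * ‖z (k + 1) - z k‖ + M * (Δp k + Δ k)) atTop (nhds 0) := by
      have h1 := hzten.const_mul L
      have h2 := (hΔp0.add hΔ0).const_mul M
      have h3 := h1.add h2
      simpa using h3
    exact squeeze_zero (fun k => norm_nonneg _) hbnd hrhs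
  exact ⟨hxten, hzten, hμten, min_o_inv hsnn hssum⟩
end
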